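/- arXiv:2206.07452 — 11 statements merged into one kernel-verified Lean document; each statement's English description precedes it below -/
import Mathlib

section
/- Let (A, μ, α, β) be a left BiHom-alternative algebra and (V, ℓ, r, φ, ψ) a representation of it. Then the coboundary operators are well defined on cochains: for every 1-cochain f, δ¹f(α(x),α(y)) = φ(δ¹f(x,y)) and δ¹f(β(x),β(y)) = ψ(δ¹f(x,y)); for every 2-cochain f, δ²f(α(x),α(y),α(z)) = φ(δ²f(x,y,z)) and δ²f(β(x),β(y),β(z)) = ψ(δ²f(x,y,z)); and for every 3-cochain f, δ³f(α(x₁),α(x₂),α(x₃),α(x₄)) = φ(δ³f(x₁,x₂,x₃,x₄)) and δ³f(β(x₁),β(x₂),β(x₃),β(x₄)) = ψ(δ³f(x₁,x₂,x₃,x₄)). -/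
/-- The BiHom-associator `as_{α,β}(x,y,z) = (xy)β(z) − α(x)(yz)`. -/
def biAssoc {A : Type*} [AddCommGroup A] (mul : A → A → A) (α β : A → A)
    (x y z : A) : A :=
  mul (mul x y) (β z) - mul (α x) (mul y z)

/-- A BiHom-algebra `(A, μ, α, β)`. -/
structure IsBiHomAlg (K : Type*) {A : Type*} [Field K] [AddCommGroup A] [Module K A]
    (mul : A → A → A) (α β : A → A) : Prop where
  mul_lin_left : ∀ y, IsLinearMap K fun x => mul x y
  mul_lin_right : ∀ x, IsLinearMap K (mul x)
  alpha_lin : IsLinearMap K α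
  beta_lin : IsLinearMap K β
  alpha_beta_comm : ∀ x, α (β x) = β (α x)
  alpha_mul : ∀ x y, α (mul x y) = mul (α x) (α y)
  beta_mul : ∀ x y, β (mul x y) = mul (β x) (β y)

/-- A left BiHom-alternative algebra. -/
structure IsLeftBiHomAlt (K : Type*) {A : Type*} [Field K] [AddCommGroup A] [Module K A]
    (mul : A → A → A) (α β : A → A) extends IsBiHomAlg K mul α β : Prop where
  left_alt : ∀ x y z,
    biAssoc mul α β (β x) (α y) z + biAssoc mul α β (β y) (α x) z = 0

/-- A representation (bimodule) `(V, ℓ, r, φ, ψ)` of a BiHom-alternative algebra. -/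
structure IsBiHomRep (K : Type*) {A V : Type*} [Field K] [AddCommGroup A] [Module K A]
    [AddCommGroup V] [Module K V] (mul : A → A → A) (α β : A → A)
    (l r : A → Module.End K V) (φ ψ : Module.End K V) : Prop where
  l_lin : IsLinearMap K l
  r_lin : IsLinearMap K r
  phi_psi_comm : ∀ v, φ (ψ v) = ψ (φ v)
  phi_l : ∀ x v, φ (l x v) = l (α x) (φ v)
  phi_r : ∀ x v, φ (r x v) = r (α x) (φ v)
  psi_l : ∀ x v, ψ (l x v) = l (β x) (ψ v)
  psi_r : ∀ x v, ψ (r x v) = r (β x) (ψ v)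
  rep1 : ∀ x v, l (mul (β x) (α x)) (ψ v) = l (α (β x)) (l (α x) v)
  rep2 : ∀ x v, r (mul (β x) (α x)) (φ v) = r (α (β x)) (r (β x) v)
  rep3 : ∀ x y v, r (β y) (l (β x) (φ v)) - l (α (β x)) (r y (φ v))
      = r (mul (α x) y) (φ (ψ v)) - r (β y) (r (α x) (ψ v))
  rep4 : ∀ x y v, l (α y) (r (α x) (ψ v)) - r (α (β x)) (l y (ψ v))
      = l (mul y (β x)) (φ (ψ v)) - l (α y) (l (β x) (φ v))

/-- A 1-cochain on `A` with values in `V`. -/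
structure IsCochain1 (K : Type*) {A V : Type*} [Field K] [AddCommGroup A] [Module K A]
    [AddCommGroup V] [Module K V] (α β : A → A) (φ ψ : Module.End K V)
    (f : A → V) : Prop where
  lin : IsLinearMap K f
  equiv_a : ∀ x, f (α x) = φ (f x)
  equiv_b : ∀ x, f (β x) = ψ (f x)

/-- A 2-cochain on `A` with values in `V`. -/
structure IsCochain2 (K : Type*) {A V : Type*} [Field K] [AddCommGroup A] [Module K A]
    [AddCommGroup V] [Module K V] (α β : A → A) (φ ψ : Module.End K V)
    (f : A → A → V) : Prop where
  lin_left : ∀ y, IsLinearMap K fun x => f x y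
  lin_right : ∀ x, IsLinearMap K (f x)
  equiv_a : ∀ x y, f (α x) (α y) = φ (f x y)
  equiv_b : ∀ x y, f (β x) (β y) = ψ (f x y)

/-- A 3-cochain on `A` with values in `V`. -/
structure IsCochain3 (K : Type*) {A V : Type*} [Field K] [AddCommGroup A] [Module K A]
    [AddCommGroup V] [Module K V] (α β : A → A) (φ ψ : Module.End K V)
    (f : A → A → A → V) : Prop where
  lin1 : ∀ y z, IsLinearMap K fun x => f x y z
  lin2 : ∀ x z, IsLinearMap K fun y => f x y z
  lin3 : ∀ x y, IsLinearMap K (f x y)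
  equiv_a : ∀ x y z, f (α x) (α y) (α z) = φ (f x y z)
  equiv_b : ∀ x y z, f (β x) (β y) (β z) = ψ (f x y z)

/-- The first coboundary operator `δ¹f(x,y) = ℓ(x)f(y) + r(y)f(x) − f(xy)`. -/
def delta1 {K A V : Type*} [Field K] [AddCommGroup A] [Module K A]
    [AddCommGroup V] [Module K V] (mul : A → A → A)
    (l r : A → Module.End K V) (f : A → V) (x y : A) : V :=
  l x (f y) + r y (f x) - f (mul x y)

/-- The second coboundary operator. -/
def delta2 {K A V : Type*} [Field K] [AddCommGroup A] [Module K A]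
    [AddCommGroup V] [Module K V] (mul : A → A → A) (α β : A → A)
    (l r : A → Module.End K V) (f : A → A → V) (x y z : A) : V :=
  r (β z) (f (β x) (α y)) - l (α (β x)) (f (α y) z)
    + r (β z) (f (β y) (α x)) - l (α (β y)) (f (α x) z)
    + f (mul (β x) (α y)) (β z) - f (α (β x)) (mul (α y) z)
    + f (mul (β y) (α x)) (β z) - f (α (β y)) (mul (α x) z)

/-- The third coboundary operator. -/
def delta3 {K A V : Type*} [Field K] [AddCommGroup A] [Module K A]
    [AddCommGroup V] [Module K V] (mul : A → A → A) (α β : A → A)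
    (l r : A → Module.End K V) (f : A → A → A → V) (x1 x2 x3 x4 : A) : V :=
  l (α x1) (f (β x2) (β x3) (β x4)) - l (α x1) (f (β x3) (β x2) (β x4))
    + r (β x4) (f (α x1) (α x2) (α x3)) - r (β x4) (f (α x2) (α x1) (α x3))
    - f (mul (α x1) (β x2)) x3 x4 - f (mul (α x2) (β x3)) x1 x4
    + f x1 (mul (α x2) (β x3)) x4 + f x3 (mul (α x1) (β x2)) x4
    - f x1 x2 (mul (α x3) (β x4)) + f x2 x1 (mul (α x3) (β x4))

/-! Each `δⁿ f` is assembled from `μ`, `α`, `β`, `ℓ`, `r` and `f` alone. Hence any multiplicative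
`σ : A → A` commuting with `α` and `β`, and intertwined with some `θ ∈ End V` by `ℓ`, `r` and `f`,
intertwines `δⁿ f` too; the theorem is the case `(σ, θ) = (α, φ)` and `(β, ψ)`. -/

section

variable {K A V : Type*} [Field K] [AddCommGroup A] [Module K A] [AddCommGroup V] [Module K V]
  {mul : A → A → A} {α β : A → A} {l r : A → Module.End K V} {σ : A → A} {θ : Module.End K V}

theorem delta1_map (hmul : ∀ x y, σ (mul x y) = mul (σ x) (σ y))
    (hl : ∀ x v, θ (l x v) = l (σ x) (θ v)) (hr : ∀ x v, θ (r x v) = r (σ x) (θ v))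
    {f : A → V} (hf : ∀ x, f (σ x) = θ (f x)) (x y : A) :
    delta1 mul l r f (σ x) (σ y) = θ (delta1 mul l r f x y) := by
  simp only [delta1, map_add, map_sub, hl, hr, hf, ← hmul]

theorem delta2_map (hmul : ∀ x y, σ (mul x y) = mul (σ x) (σ y))
    (hα : ∀ x, σ (α x) = α (σ x)) (hβ : ∀ x, σ (β x) = β (σ x))
    (hl : ∀ x v, θ (l x v) = l (σ x) (θ v)) (hr : ∀ x v, θ (r x v) = r (σ x) (θ v))
    {f : A → A → V} (hf : ∀ x y, f (σ x) (σ y) = θ (f x y)) (x y z : A) :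
    delta2 mul α β l r f (σ x) (σ y) (σ z) = θ (delta2 mul α β l r f x y z) := by
  simp only [delta2, map_add, map_sub, hl, hr, ← hα, ← hβ, ← hmul, hf]

theorem delta3_map (hmul : ∀ x y, σ (mul x y) = mul (σ x) (σ y))
    (hα : ∀ x, σ (α x) = α (σ x)) (hβ : ∀ x, σ (β x) = β (σ x))
    (hl : ∀ x v, θ (l x v) = l (σ x) (θ v)) (hr : ∀ x v, θ (r x v) = r (σ x) (θ v))
    {f : A → A → A → V} (hf : ∀ x y z, f (σ x) (σ y) (σ z) = θ (f x y z))
    (x1 x2 x3 x4 : A) :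
    delta3 mul α β l r f (σ x1) (σ x2) (σ x3) (σ x4)
      = θ (delta3 mul α β l r f x1 x2 x3 x4) := by
  simp only [delta3, map_add, map_sub, hl, hr, ← hα, ← hβ, ← hmul, hf]

end

theorem coboundary_well_defined_general
    (K : Type*) [Field K] {A V : Type*} [AddCommGroup A] [Module K A]
    [AddCommGroup V] [Module K V]
    (mul : A → A → A) (α β : A → A) (halg : IsLeftBiHomAlt K mul α β)
    (l r : A → Module.End K V) (φ ψ : Module.End K V)
    (hrep : IsBiHomRep K mul α β l r φ ψ) :
    (∀ f : A → V, IsCochain1 K α β φ ψ f →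
      (∀ x y, delta1 mul l r f (α x) (α y) = φ (delta1 mul l r f x y)) ∧
      (∀ x y, delta1 mul l r f (β x) (β y) = ψ (delta1 mul l r f x y))) ∧
    (∀ f : A → A → V, IsCochain2 K α β φ ψ f →
      (∀ x y z, delta2 mul α β l r f (α x) (α y) (α z) = φ (delta2 mul α β l r f x y z)) ∧
      (∀ x y z, delta2 mul α β l r f (β x) (β y) (β z) = ψ (delta2 mul α β l r f x y z))) ∧
    (∀ f : A → A → A → V, IsCochain3 K α β φ ψ f →
      (∀ x1 x2 x3 x4, delta3 mul α β l r f (α x1) (α x2) (α x3) (α x4)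
          = φ (delta3 mul α β l r f x1 x2 x3 x4)) ∧
      (∀ x1 x2 x3 x4, delta3 mul α β l r f (β x1) (β x2) (β x3) (β x4)
          = ψ (delta3 mul α β l r f x1 x2 x3 x4))) := by
  have hαβ := halg.alpha_beta_comm
  have hβα (x : A) : β (α x) = α (β x) := (hαβ x).symm
  refine ⟨fun f hf => ⟨?_, ?_⟩, fun f hf => ⟨?_, ?_⟩, fun f hf => ⟨?_, ?_⟩⟩
  · exact delta1_map halg.alpha_mul hrep.phi_l hrep.phi_r hf.equiv_a
  · exact delta1_map halg.beta_mul hrep.psi_l hrep.psi_r hf.equiv_b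
  · exact delta2_map halg.alpha_mul (fun _ => rfl) hαβ hrep.phi_l hrep.phi_r hf.equiv_a
  · exact delta2_map halg.beta_mul hβα (fun _ => rfl) hrep.psi_l hrep.psi_r hf.equiv_b
  · exact delta3_map halg.alpha_mul (fun _ => rfl) hαβ hrep.phi_l hrep.phi_r hf.equiv_a
  · exact delta3_map halg.beta_mul hβα (fun _ => rfl) hrep.psi_l hrep.psi_r hf.equiv_b

/-- The coboundary operators are well defined on cochains: `δⁿ` of an `n`-cochain
satisfies the `(n+1)`-cochain equivariance conditions, for `n = 1, 2, 3`. -/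
theorem coboundary_well_defined
    (K : Type*) [Field K] [CharZero K] {A V : Type*} [AddCommGroup A] [Module K A]
    [AddCommGroup V] [Module K V]
    (mul : A → A → A) (α β : A → A) (halg : IsLeftBiHomAlt K mul α β)
    (l r : A → Module.End K V) (φ ψ : Module.End K V)
    (hrep : IsBiHomRep K mul α β l r φ ψ) :
    (∀ f : A → V, IsCochain1 K α β φ ψ f →
      (∀ x y, delta1 mul l r f (α x) (α y) = φ (delta1 mul l r f x y)) ∧
      (∀ x y, delta1 mul l r f (β x) (β y) = ψ (delta1 mul l r f x y))) ∧
    (∀ f : A → A → V, IsCochain2 K α β φ ψ f →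
      (∀ x y z, delta2 mul α β l r f (α x) (α y) (α z) = φ (delta2 mul α β l r f x y z)) ∧
      (∀ x y z, delta2 mul α β l r f (β x) (β y) (β z) = ψ (delta2 mul α β l r f x y z))) ∧
    (∀ f : A → A → A → V, IsCochain3 K α β φ ψ f →
      (∀ x1 x2 x3 x4, delta3 mul α β l r f (α x1) (α x2) (α x3) (α x4)
          = φ (delta3 mul α β l r f x1 x2 x3 x4)) ∧
      (∀ x1 x2 x3 x4, delta3 mul α β l r f (β x1) (β x2) (β x3) (β x4)
          = ψ (delta3 mul α β l r f x1 x2 x3 x4))) :=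
  coboundary_well_defined_general K mul α β halg l r φ ψ hrep
end

section
/- Let (A, μ, α, β) be a left BiHom-alternative algebra and (d_i)_{i≥0} a formal deformation of it. Let p ≥ 1 and suppose d_i = 0 for all 1 ≤ i ≤ p−1. Then d_p is a 2-cocycle with coefficients in the adjoint representation: δ²d_p = 0, i.e. for all x, y, z ∈ A, d_p(β(x),α(y))·β(z) − αβ(x)·d_p(α(y),z) + d_p(β(y),α(x))·β(z) − αβ(y)·d_p(α(x),z) + d_p(β(x)α(y),β(z)) − d_p(αβ(x),α(y)z) + d_p(β(y)α(x),β(z)) − d_p(αβ(y),α(x)z) = 0. -/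
/-- The `⋄` operation on bilinear maps:
`d ⋄ d'(x,y,z) = d(d'(β(x),α(y)),β(z)) − d(αβ(x),d'(α(y),z))
 + d(d'(β(y),α(x)),β(z)) − d(αβ(y),d'(α(x),z))`. -/
def diamond {A : Type*} [AddCommGroup A] (α β : A → A) (d d' : A → A → A)
    (x y z : A) : A :=
  d (d' (β x) (α y)) (β z) - d (α (β x)) (d' (α y) z)
    + d (d' (β y) (α x)) (β z) - d (α (β y)) (d' (α x) z)

/-- A one-parameter formal deformation of a left BiHom-alternative algebra
`(A, μ, α, β)`: a sequence of bilinear maps `d_i` with `d₀ = μ`, commuting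
appropriately with `α` and `β`, and satisfying the deformation equations
`Σ_{i+j=k} d_i ⋄ d_j = 0` for every `k`. -/
structure IsFormalDeformation (K : Type*) {A : Type*} [Field K] [AddCommGroup A]
    [Module K A] (mul : A → A → A) (α β : A → A) (d : ℕ → A → A → A) : Prop where
  d_zero : d 0 = mul
  lin_left : ∀ i y, IsLinearMap K fun x => d i x y
  lin_right : ∀ i x, IsLinearMap K (d i x)
  equiv_a : ∀ i x y, d i (α x) (α y) = α (d i x y)
  equiv_b : ∀ i x y, d i (β x) (β y) = β (d i x y)
  deform_eq : ∀ k x y z,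
    ∑ p ∈ Finset.HasAntidiagonal.antidiagonal k, diamond α β (d p.1) (d p.2) x y z = 0

/-- The second coboundary operator with coefficients in the adjoint representation. -/
def delta2adj {A : Type*} [AddCommGroup A] (mul : A → A → A) (α β : A → A)
    (g : A → A → A) (x y z : A) : A :=
  mul (g (β x) (α y)) (β z) - mul (α (β x)) (g (α y) z)
    + mul (g (β y) (α x)) (β z) - mul (α (β y)) (g (α x) z)
    + g (mul (β x) (α y)) (β z) - g (α (β x)) (mul (α y) z)
    + g (mul (β y) (α x)) (β z) - g (α (β y)) (mul (α x) z)

/-- The third coboundary operator with coefficients in the adjoint representation. -/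
def delta3adj {A : Type*} [AddCommGroup A] (mul : A → A → A) (α β : A → A)
    (f : A → A → A → A) (x1 x2 x3 x4 : A) : A :=
  mul (α x1) (f (β x2) (β x3) (β x4)) - mul (α x1) (f (β x3) (β x2) (β x4))
    + mul (f (α x1) (α x2) (α x3)) (β x4) - mul (f (α x2) (α x1) (α x3)) (β x4)
    - f (mul (α x1) (β x2)) x3 x4 - f (mul (α x2) (β x3)) x1 x4
    + f x1 (mul (α x2) (β x3)) x4 + f x3 (mul (α x1) (β x2)) x4
    - f x1 x2 (mul (α x3) (β x4)) + f x2 x1 (mul (α x3) (β x4))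

/-- A 2-cochain with coefficients in the adjoint representation. -/
structure IsAdjCochain2 (K : Type*) {A : Type*} [Field K] [AddCommGroup A] [Module K A]
    (α β : A → A) (g : A → A → A) : Prop where
  lin_left : ∀ y, IsLinearMap K fun x => g x y
  lin_right : ∀ x, IsLinearMap K (g x)
  equiv_a : ∀ x y, g (α x) (α y) = α (g x y)
  equiv_b : ∀ x y, g (β x) (β y) = β (g x y)

/-- A 3-cochain with coefficients in the adjoint representation. -/
structure IsAdjCochain3 (K : Type*) {A : Type*} [Field K] [AddCommGroup A] [Module K A]
    (α β : A → A) (g : A → A → A → A) : Prop where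
  lin1 : ∀ y z, IsLinearMap K fun x => g x y z
  lin2 : ∀ x z, IsLinearMap K fun y => g x y z
  lin3 : ∀ x y, IsLinearMap K (g x y)
  equiv_a : ∀ x y z, g (α x) (α y) (α z) = α (g x y z)
  equiv_b : ∀ x y z, g (β x) (β y) (β z) = β (g x y z)

theorem delta2adj_eq_diamond_add_diamond {A : Type*} [AddCommGroup A] (mul : A → A → A)
    (α β : A → A) (g : A → A → A) (x y z : A) :
    delta2adj mul α β g x y z = diamond α β mul g x y z + diamond α β g mul x y z := by
  unfold delta2adj diamond
  abel

theorem diamond_zero_left {A : Type*} [AddCommGroup A] (α β : A → A) (d' : A → A → A)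
    (x y z : A) : diamond α β 0 d' x y z = 0 := by
  simp [diamond]

theorem Finset.Nat.sum_antidiagonal_eq_add_of_inner_eq_zero {M : Type*} [AddCommMonoid M]
    {p : ℕ} {f : ℕ → ℕ → M} (hp : p ≠ 0)
    (hinner : ∀ i j, i + j = p → i ≠ 0 → j ≠ 0 → f i j = 0) :
    ∑ q ∈ antidiagonal p, f q.1 q.2 = f 0 p + f p 0 := by
  refine Finset.sum_eq_add_of_mem (0, p) (p, 0) (by simp) (by simp) (by simp [hp]) ?_
  rintro ⟨i, j⟩ hij ⟨hne_left, hne_right⟩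
  rw [HasAntidiagonal.mem_antidiagonal] at hij
  exact hinner i j hij (by rintro rfl; simp_all) (by rintro rfl; simp_all)

theorem infinitesimal_is_two_cocycle_general
    (K : Type*) [Field K] {A : Type*} [AddCommGroup A] [Module K A]
    (mul : A → A → A) (α β : A → A)
    (d : ℕ → A → A → A) (hd : IsFormalDeformation K mul α β d)
    (p : ℕ) (hp : 1 ≤ p) (hvanish : ∀ i, 1 ≤ i → i ≤ p - 1 → ∀ x y, d i x y = 0) :
    ∀ x y z, delta2adj mul α β (d p) x y z = 0 := by
  intro x y z
  have hinner : ∀ i j, i + j = p → i ≠ 0 → j ≠ 0 → diamond α β (d i) (d j) x y z = 0 := by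
    intro i j hij hi hj
    have hdi : d i = 0 := funext₂ (hvanish i (by omega) (by omega))
    rw [hdi, diamond_zero_left]
  have hdeform := hd.deform_eq p x y z
  rw [Finset.Nat.sum_antidiagonal_eq_add_of_inner_eq_zero (by omega) hinner, hd.d_zero] at hdeform
  rw [delta2adj_eq_diamond_add_diamond, hdeform]

/-- If `(d_i)` is a formal deformation of a left BiHom-alternative algebra and
`d_i = 0` for `1 ≤ i ≤ p−1`, then `d_p` is a 2-cocycle with coefficients in the
adjoint representation: `δ²d_p = 0`. -/
theorem infinitesimal_is_two_cocycle
    (K : Type*) [Field K] [CharZero K] {A : Type*} [AddCommGroup A] [Module K A]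
    (mul : A → A → A) (α β : A → A) (halg : IsLeftBiHomAlt K mul α β)
    (d : ℕ → A → A → A) (hd : IsFormalDeformation K mul α β d)
    (p : ℕ) (hp : 1 ≤ p) (hvanish : ∀ i, 1 ≤ i → i ≤ p - 1 → ∀ x y, d i x y = 0) :
    ∀ x y z, delta2adj mul α β (d p) x y z = 0 :=
  infinitesimal_is_two_cocycle_general K mul α β d hd p hp hvanish
end

section
/- Let (A, μ, α, β) be a left BiHom-alternative algebra such that every 3-cocycle with coefficients in the adjoint representation is a 3-coboundary (i.e., for every 3-cochain g with δ³g = 0 there exists a 2-cochain h with δ²h = g). Then every 2-cocycle is integrable: for every 2-cochain d with δ²d = 0 there exists a formal deformation (d_i)_{i≥0} of (A, μ, α, β) with d₀ = μ and d₁ = d. -/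
/-! The deformation equation of order `k + 2` reads `δ² d_{k+2} = -Σ_{i+j=k} d_{i+1} ⋄ d_{j+1}`,
so the `d_k` can be built recursively as soon as the right-hand side, the obstruction, is a
3-cocycle: the vanishing of `H³` then provides `d_{k+2}`. The obstruction is a 3-cochain because
the earlier `d_i` are 2-cochains, and it is a 3-cocycle because it is symmetric in its first two
arguments, while `δ³` vanishes on every such cochain. In orders 0 and 1 the deformation equation
is left BiHom-alternativity and `δ² d₁ = 0`. -/

open Finset

section Cochains

variable {K : Type*} [Field K] {A : Type*} [AddCommGroup A] [Module K A] {α β : A → A}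

theorem diamond_swap (α β : A → A) (f h : A → A → A) (x y z : A) :
    diamond α β f h x y z = diamond α β f h y x z := by
  unfold diamond; abel

theorem diamond_mul_add_diamond_mul_eq_delta2adj (mul h : A → A → A) (α β : A → A) (x y z : A) :
    diamond α β mul h x y z + diamond α β h mul x y z = delta2adj mul α β h x y z := by
  unfold diamond delta2adj; abel

theorem diamond_mul_mul_eq_biAssoc (mul : A → A → A) (α β : A → A) (x y z : A) :
    diamond α β mul mul x y z
      = biAssoc mul α β (β x) (α y) z + biAssoc mul α β (β y) (α x) z := by
  unfold diamond biAssoc; abel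

theorem delta3adj_eq_zero_of_swap (mul : A → A → A) (α β : A → A) {f : A → A → A → A}
    (hf : ∀ x y z, f x y z = f y x z) (x1 x2 x3 x4 : A) :
    delta3adj mul α β f x1 x2 x3 x4 = 0 := by
  unfold delta3adj
  rw [hf (β x2), hf (α x1), hf (mul (α x1) (β x2)), hf (mul (α x2) (β x3)), hf x1 x2]
  abel

theorem IsBiHomAlg.isAdjCochain2_mul {mul : A → A → A} (halg : IsBiHomAlg K mul α β) :
    IsAdjCochain2 K α β mul :=
  ⟨halg.mul_lin_left, halg.mul_lin_right, fun x y => (halg.alpha_mul x y).symm,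
    fun x y => (halg.beta_mul x y).symm⟩

namespace IsAdjCochain2

variable {g : A → A → A} (hg : IsAdjCochain2 K α β g)
include hg

theorem map_add_left (x x' y : A) : g (x + x') y = g x y + g x' y :=
  (hg.lin_left y).map_add x x'

theorem map_add_right (x y y' : A) : g x (y + y') = g x y + g x y' :=
  (hg.lin_right x).map_add y y'

theorem map_smul_left (c : K) (x y : A) : g (c • x) y = c • g x y :=
  (hg.lin_left y).map_smul c x

theorem map_smul_right (c : K) (x y : A) : g x (c • y) = c • g x y :=
  (hg.lin_right x).map_smul c y

end IsAdjCochain2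

theorem IsAdjCochain2.diamond_map_alpha (hα : IsLinearMap K α) (hαβ : ∀ x, α (β x) = β (α x))
    {f h : A → A → A} (hf : IsAdjCochain2 K α β f) (hh : IsAdjCochain2 K α β h) (x y z : A) :
    diamond α β f h (α x) (α y) (α z) = α (diamond α β f h x y z) := by
  simp only [diamond, ← hαβ, hf.equiv_a, hh.equiv_a, hα.map_add, hα.map_sub]

theorem IsAdjCochain2.diamond_map_beta (hβ : IsLinearMap K β) (hαβ : ∀ x, α (β x) = β (α x))
    {f h : A → A → A} (hf : IsAdjCochain2 K α β f) (hh : IsAdjCochain2 K α β h) (x y z : A) :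
    diamond α β f h (β x) (β y) (β z) = β (diamond α β f h x y z) := by
  simp only [diamond, hαβ, hf.equiv_b, hh.equiv_b, hβ.map_add, hβ.map_sub]

theorem IsAdjCochain2.isAdjCochain3_diamond (hα : IsLinearMap K α) (hβ : IsLinearMap K β)
    (hαβ : ∀ x, α (β x) = β (α x)) {f h : A → A → A}
    (hf : IsAdjCochain2 K α β f) (hh : IsAdjCochain2 K α β h) :
    IsAdjCochain3 K α β (diamond α β f h) := by
  refine ⟨fun y z => ⟨?_, ?_⟩, fun x z => ⟨?_, ?_⟩, fun x y => ⟨?_, ?_⟩,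
    hf.diamond_map_alpha hα hαβ hh, hf.diamond_map_beta hβ hαβ hh⟩ <;> intros <;>
    simp only [diamond, hα.map_add, hβ.map_add, hα.map_smul, hβ.map_smul,
      hf.map_add_left, hf.map_add_right, hh.map_add_left, hh.map_add_right, hf.map_smul_left,
      hf.map_smul_right, hh.map_smul_left, hh.map_smul_right, smul_add, smul_sub] <;> abel

namespace IsAdjCochain3

variable (hα : IsLinearMap K α) (hβ : IsLinearMap K β)
include hα hβ

theorem zero : IsAdjCochain3 K α β 0 :=
  ⟨fun _ _ => (0 : A →ₗ[K] A).isLinear, fun _ _ => (0 : A →ₗ[K] A).isLinear,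
    fun _ _ => (0 : A →ₗ[K] A).isLinear, fun _ _ _ => hα.map_zero.symm,
    fun _ _ _ => hβ.map_zero.symm⟩

theorem add {f g : A → A → A → A} (hf : IsAdjCochain3 K α β f) (hg : IsAdjCochain3 K α β g) :
    IsAdjCochain3 K α β (f + g) :=
  ⟨fun y z => (IsLinearMap.mk' _ (hf.lin1 y z) + IsLinearMap.mk' _ (hg.lin1 y z)).isLinear,
    fun x z => (IsLinearMap.mk' _ (hf.lin2 x z) + IsLinearMap.mk' _ (hg.lin2 x z)).isLinear,
    fun x y => (IsLinearMap.mk' _ (hf.lin3 x y) + IsLinearMap.mk' _ (hg.lin3 x y)).isLinear,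
    fun x y z => by simp only [Pi.add_apply, hf.equiv_a, hg.equiv_a, hα.map_add],
    fun x y z => by simp only [Pi.add_apply, hf.equiv_b, hg.equiv_b, hβ.map_add]⟩

theorem neg {f : A → A → A → A} (hf : IsAdjCochain3 K α β f) : IsAdjCochain3 K α β (-f) :=
  ⟨fun y z => (-IsLinearMap.mk' _ (hf.lin1 y z)).isLinear,
    fun x z => (-IsLinearMap.mk' _ (hf.lin2 x z)).isLinear,
    fun x y => (-IsLinearMap.mk' _ (hf.lin3 x y)).isLinear,
    fun x y z => by simp only [Pi.neg_apply, hf.equiv_a, hα.map_neg],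
    fun x y z => by simp only [Pi.neg_apply, hf.equiv_b, hβ.map_neg]⟩

theorem sum {ι : Type*} {s : Finset ι} {f : ι → A → A → A → A}
    (hf : ∀ i ∈ s, IsAdjCochain3 K α β (f i)) : IsAdjCochain3 K α β (∑ i ∈ s, f i) :=
  Finset.sum_induction f _ (fun _ _ => add hα hβ) (zero hα hβ) hf

end IsAdjCochain3

end Cochains

section Deformation

variable {A : Type*} [AddCommGroup A]

def deformationObstruction (α β : A → A) (d : ℕ → A → A → A) (k : ℕ) : A → A → A → A :=
  ∑ p ∈ antidiagonal k, diamond α β (d (p.1 + 1)) (d (p.2 + 1))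

theorem deformationObstruction_swap (α β : A → A) (d : ℕ → A → A → A) (k : ℕ) (x y z : A) :
    deformationObstruction α β d k x y z = deformationObstruction α β d k y x z := by
  simp only [deformationObstruction, Finset.sum_apply]
  exact sum_congr rfl fun p _ => diamond_swap α β _ _ x y z

theorem sum_antidiagonal_add_two_diamond (α β : A → A) (d : ℕ → A → A → A) (k : ℕ) (x y z : A) :
    ∑ p ∈ antidiagonal (k + 2), diamond α β (d p.1) (d p.2) x y z
      = diamond α β (d 0) (d (k + 2)) x y z + diamond α β (d (k + 2)) (d 0) x y z
        + deformationObstruction α β d k x y z := by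
  rw [Nat.sum_antidiagonal_succ, Nat.sum_antidiagonal_succ']
  simp only [deformationObstruction, Finset.sum_apply]
  abel

theorem isAdjCochain3_deformationObstruction {K : Type*} [Field K] [Module K A] {α β : A → A}
    (hα : IsLinearMap K α) (hβ : IsLinearMap K β) (hαβ : ∀ x, α (β x) = β (α x))
    {d : ℕ → A → A → A} {k : ℕ} (hd : ∀ i, 0 < i → i ≤ k + 1 → IsAdjCochain2 K α β (d i)) :
    IsAdjCochain3 K α β (deformationObstruction α β d k) := by
  refine IsAdjCochain3.sum hα hβ fun p hp => ?_
  have hp : p.1 + p.2 = k := mem_antidiagonal.mp hp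
  exact (hd _ (by omega) (by omega)).isAdjCochain3_diamond hα hβ hαβ (hd _ (by omega) (by omega))

def integrationSeq (solve : (A → A → A → A) → A → A → A) (α β : A → A) (mul d₁ : A → A → A) :
    ℕ → A → A → A
  | 0 => mul
  | 1 => d₁
  | k + 2 => solve (-∑ p ∈ (antidiagonal k).attach,
      diamond α β (integrationSeq solve α β mul d₁ (p.1.1 + 1))
        (integrationSeq solve α β mul d₁ (p.1.2 + 1)))
decreasing_by all_goals have := mem_antidiagonal.mp p.2; omega

variable (solve : (A → A → A → A) → A → A → A) (α β : A → A) (mul d₁ : A → A → A)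

theorem integrationSeq_zero : integrationSeq solve α β mul d₁ 0 = mul := by
  rw [integrationSeq]

theorem integrationSeq_one : integrationSeq solve α β mul d₁ 1 = d₁ := by
  rw [integrationSeq]

theorem integrationSeq_add_two (k : ℕ) :
    integrationSeq solve α β mul d₁ (k + 2)
      = solve (-deformationObstruction α β (integrationSeq solve α β mul d₁) k) := by
  rw [integrationSeq, deformationObstruction,
    ← sum_attach (antidiagonal k) fun p => diamond α β _ _]

end Deformation

def IsDelta2Solver (K : Type*) {A : Type*} [Field K] [AddCommGroup A] [Module K A]
    (mul : A → A → A) (α β : A → A) (solve : (A → A → A → A) → A → A → A) : Prop :=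
  ∀ g, IsAdjCochain3 K α β g → (∀ x1 x2 x3 x4, delta3adj mul α β g x1 x2 x3 x4 = 0) →
    IsAdjCochain2 K α β (solve g) ∧ ∀ x y z, delta2adj mul α β (solve g) x y z = g x y z

section Integration

variable {K : Type*} [Field K] {A : Type*} [AddCommGroup A] [Module K A]
  {mul : A → A → A} {α β : A → A} {solve : (A → A → A → A) → A → A → A} {d₁ : A → A → A}
  (halg : IsBiHomAlg K mul α β)
  (hsolve : IsDelta2Solver K mul α β solve)
include halg hsolve

theorem integrationSeq_add_two_spec {k : ℕ}
    (hd : ∀ i, 0 < i → i ≤ k + 1 → IsAdjCochain2 K α β (integrationSeq solve α β mul d₁ i)) :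
    IsAdjCochain2 K α β (integrationSeq solve α β mul d₁ (k + 2)) ∧ ∀ x y z,
      delta2adj mul α β (integrationSeq solve α β mul d₁ (k + 2)) x y z
        = -deformationObstruction α β (integrationSeq solve α β mul d₁) k x y z := by
  have hobs := isAdjCochain3_deformationObstruction halg.alpha_lin halg.beta_lin
    halg.alpha_beta_comm hd
  rw [integrationSeq_add_two]
  exact hsolve _ (hobs.neg halg.alpha_lin halg.beta_lin) (delta3adj_eq_zero_of_swap _ _ _
    fun x y z => congrArg Neg.neg (deformationObstruction_swap α β _ k x y z))

variable (hd₁ : IsAdjCochain2 K α β d₁)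
include hd₁

theorem isAdjCochain2_integrationSeq :
    ∀ n, IsAdjCochain2 K α β (integrationSeq solve α β mul d₁ n)
  | 0 => by rw [integrationSeq_zero]; exact halg.isAdjCochain2_mul
  | 1 => by rw [integrationSeq_one]; exact hd₁
  | _ + 2 => (integrationSeq_add_two_spec halg hsolve
      fun i _ _ => isAdjCochain2_integrationSeq i).1

theorem delta2adj_integrationSeq_add_two (k : ℕ) (x y z : A) :
    delta2adj mul α β (integrationSeq solve α β mul d₁ (k + 2)) x y z
      = -deformationObstruction α β (integrationSeq solve α β mul d₁) k x y z :=
  (integrationSeq_add_two_spec halg hsolve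
    fun i _ _ => isAdjCochain2_integrationSeq halg hsolve hd₁ i).2 x y z

end Integration

theorem IsLeftBiHomAlt.isFormalDeformation_integrationSeq {K : Type*} [Field K] {A : Type*}
    [AddCommGroup A] [Module K A] {mul : A → A → A} {α β : A → A}
    {solve : (A → A → A → A) → A → A → A} {d₁ : A → A → A} (halg : IsLeftBiHomAlt K mul α β)
    (hsolve : IsDelta2Solver K mul α β solve) (hd₁ : IsAdjCochain2 K α β d₁)
    (hcoc : ∀ x y z, delta2adj mul α β d₁ x y z = 0) :
    IsFormalDeformation K mul α β (integrationSeq solve α β mul d₁) := by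
  have hd := isAdjCochain2_integrationSeq halg.toIsBiHomAlg hsolve hd₁
  refine ⟨integrationSeq_zero .., fun i => (hd i).lin_left, fun i => (hd i).lin_right,
    fun i => (hd i).equiv_a, fun i => (hd i).equiv_b, ?_⟩
  rintro (_ | _ | k) x y z
  · rw [Nat.antidiagonal_zero, sum_singleton, integrationSeq_zero, diamond_mul_mul_eq_biAssoc]
    exact halg.left_alt x y z
  · rw [Nat.sum_antidiagonal_succ, Nat.antidiagonal_zero, sum_singleton, integrationSeq_zero,
      integrationSeq_one, diamond_mul_add_diamond_mul_eq_delta2adj]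
    exact hcoc x y z
  · rw [sum_antidiagonal_add_two_diamond, integrationSeq_zero,
      diamond_mul_add_diamond_mul_eq_delta2adj,
      delta2adj_integrationSeq_add_two halg.toIsBiHomAlg hsolve hd₁, neg_add_cancel]

theorem two_cocycle_integrable_of_H3_trivial_general
    (K : Type*) [Field K] {A : Type*} [AddCommGroup A] [Module K A]
    (mul : A → A → A) (α β : A → A) (halg : IsLeftBiHomAlt K mul α β)
    (H3 : ∀ g : A → A → A → A, IsAdjCochain3 K α β g →
      (∀ x1 x2 x3 x4, delta3adj mul α β g x1 x2 x3 x4 = 0) →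
      ∃ h : A → A → A, IsAdjCochain2 K α β h ∧
        ∀ x y z, delta2adj mul α β h x y z = g x y z) :
    ∀ dd : A → A → A, IsAdjCochain2 K α β dd →
      (∀ x y z, delta2adj mul α β dd x y z = 0) →
      ∃ d : ℕ → A → A → A, IsFormalDeformation K mul α β d ∧ d 1 = dd := by
  intro dd hdd hcoc
  choose! solve hsolve using H3
  exact ⟨integrationSeq solve α β mul dd, halg.isFormalDeformation_integrationSeq hsolve hdd hcoc,
    integrationSeq_one ..⟩

/-- If every 3-cocycle with coefficients in the adjoint representation is a
3-coboundary, then every 2-cocycle is integrable: it is the infinitesimal of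
some formal deformation. -/
theorem two_cocycle_integrable_of_H3_trivial
    (K : Type*) [Field K] [CharZero K] {A : Type*} [AddCommGroup A] [Module K A]
    (mul : A → A → A) (α β : A → A) (halg : IsLeftBiHomAlt K mul α β)
    (H3 : ∀ g : A → A → A → A, IsAdjCochain3 K α β g →
      (∀ x1 x2 x3 x4, delta3adj mul α β g x1 x2 x3 x4 = 0) →
      ∃ h : A → A → A, IsAdjCochain2 K α β h ∧
        ∀ x y z, delta2adj mul α β h x y z = g x y z) :
    ∀ dd : A → A → A, IsAdjCochain2 K α β dd →
      (∀ x y z, delta2adj mul α β dd x y z = 0) →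
      ∃ d : ℕ → A → A → A, IsFormalDeformation K mul α β d ∧ d 1 = dd :=
  two_cocycle_integrable_of_H3_trivial_general K mul α β halg H3
end

section
/- Let (A, μ, α, β) be a left BiHom-alternative algebra and let (d_i)_{i≥0} and (d'_i)_{i≥0} be formal deformations of it which are equivalent: there exists a sequence of linear maps (φ_i)_{i≥0}, φ_i: A → A, with φ₀ = id_A, φ_i∘α = α∘φ_i and φ_i∘β = β∘φ_i for all i, and such that for all n ≥ 0 and all x, y ∈ A: Σ_{i+j=n} φ_i(d_j(x,y)) = Σ_{i+k+l=n} d'_i(φ_k(x),φ_l(y)). Then d₁ and d'₁ are cohomologous: for all x, y ∈ A, d₁(x,y) − d'₁(x,y) = x·φ₁(y) + φ₁(x)·y − φ₁(xy), i.e. d₁ − d'₁ = δ¹φ₁ with coefficients in the adjoint representation. -/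
/-!
Comparing the coefficients of `t¹` in `Φ_t ∘ d_t = d'_t ∘ (Φ_t × Φ_t)` gives
`φ₁(xy) + d₁(x,y) = d'₁(x,y) + x φ₁(y) + φ₁(x) y`, because `φ₀ = id` and `d₀ = d'₀ = μ`;
this is the claim rearranged.
-/

def delta1adj {A : Type*} [AddCommGroup A] (mul : A → A → A) (h : A → A) (x y : A) : A :=
  mul x (h y) + mul (h x) y - h (mul x y)

theorem sum_antidiagonal_one {M : Type*} [AddCommMonoid M] (f : ℕ × ℕ → M) :
    ∑ p ∈ Finset.HasAntidiagonal.antidiagonal 1, f p = f (0, 1) + f (1, 0) := by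
  rw [Finset.Nat.sum_antidiagonal_succ, Finset.Nat.antidiagonal_zero, Finset.sum_singleton]

theorem sub_eq_delta1adj_of_equiv_order_one {A : Type*} [AddCommGroup A]
    (mul : A → A → A) (d d' : ℕ → A → A → A) (Φ : ℕ → A → A)
    (hd0 : d 0 = mul) (hd'0 : d' 0 = mul) (hΦ0 : Φ 0 = id) (x y : A)
    (hequiv : ∑ p ∈ Finset.HasAntidiagonal.antidiagonal 1, Φ p.1 (d p.2 x y)
        = ∑ p ∈ Finset.HasAntidiagonal.antidiagonal 1,
            ∑ q ∈ Finset.HasAntidiagonal.antidiagonal p.2, d' p.1 (Φ q.1 x) (Φ q.2 y)) :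
    d 1 x y - d' 1 x y = delta1adj mul (Φ 1) x y := by
  simp only [sum_antidiagonal_one, Finset.Nat.antidiagonal_zero, Finset.sum_singleton,
    hd0, hd'0, hΦ0, id] at hequiv
  rwa [delta1adj, sub_eq_sub_iff_add_eq_add]

theorem equivalent_deformations_infinitesimals_cohomologous_general
    (K : Type*) [Field K] {A : Type*} [AddCommGroup A] [Module K A]
    (mul : A → A → A) (α β : A → A)
    (d d' : ℕ → A → A → A)
    (hd : IsFormalDeformation K mul α β d) (hd' : IsFormalDeformation K mul α β d')
    (Φ : ℕ → A → A) (hΦ0 : Φ 0 = id)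
    (hequiv : ∀ n x y,
      ∑ p ∈ Finset.HasAntidiagonal.antidiagonal n, Φ p.1 (d p.2 x y)
        = ∑ p ∈ Finset.HasAntidiagonal.antidiagonal n, ∑ q ∈ Finset.HasAntidiagonal.antidiagonal p.2,
            d' p.1 (Φ q.1 x) (Φ q.2 y)) :
    ∀ x y, d 1 x y - d' 1 x y
      = mul x (Φ 1 y) + mul (Φ 1 x) y - Φ 1 (mul x y) := fun x y =>
  sub_eq_delta1adj_of_equiv_order_one mul d d' Φ hd.d_zero hd'.d_zero hΦ0 x y (hequiv 1 x y)

/-- If two formal deformations of a left BiHom-alternative algebra are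
equivalent, then their infinitesimals `d₁` and `d'₁` are cohomologous:
`d₁ − d'₁ = δ¹φ₁` with coefficients in the adjoint representation. -/
theorem equivalent_deformations_infinitesimals_cohomologous
    (K : Type*) [Field K] [CharZero K] {A : Type*} [AddCommGroup A] [Module K A]
    (mul : A → A → A) (α β : A → A) (halg : IsLeftBiHomAlt K mul α β)
    (d d' : ℕ → A → A → A)
    (hd : IsFormalDeformation K mul α β d) (hd' : IsFormalDeformation K mul α β d')
    (Φ : ℕ → A → A) (hΦlin : ∀ i, IsLinearMap K (Φ i)) (hΦ0 : Φ 0 = id)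
    (hΦa : ∀ i x, Φ i (α x) = α (Φ i x)) (hΦb : ∀ i x, Φ i (β x) = β (Φ i x))
    (hequiv : ∀ n x y,
      ∑ p ∈ Finset.HasAntidiagonal.antidiagonal n, Φ p.1 (d p.2 x y)
        = ∑ p ∈ Finset.HasAntidiagonal.antidiagonal n, ∑ q ∈ Finset.HasAntidiagonal.antidiagonal p.2,
            d' p.1 (Φ q.1 x) (Φ q.2 y)) :
    ∀ x y, d 1 x y - d' 1 x y
      = mul x (Φ 1 y) + mul (Φ 1 x) y - Φ 1 (mul x y) :=
  equivalent_deformations_infinitesimals_cohomologous_general K mul α β d d' hd hd' Φ hΦ0 hequiv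
end

section
/- Let (A, μ, α, β) be a left BiHom-alternative algebra such that every 2-cocycle with coefficients in the adjoint representation is a 1-coboundary (i.e., for every 2-cochain g with δ²g = 0 there exists a linear map h: A → A commuting with α and β such that g = δ¹h). Then (A, μ, α, β) is analytically rigid: every formal deformation (d_i)_{i≥0} of (A, μ, α, β) is equivalent to the null deformation, i.e. there exists a sequence of linear maps (φ_i)_{i≥0}, φ_i: A → A, with φ₀ = id_A, φ_i∘α = α∘φ_i and φ_i∘β = β∘φ_i for all i, such that for all n ≥ 0 and all x, y ∈ A: Σ_{i+j=n} φ_i(d_j(x,y)) = Σ_{k+l=n} μ(φ_k(x),φ_l(y)). -/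
/-!
The equivalence `Φ_t = ∑ Φ_i t ^ i` is built one order at a time. Suppose that
`Φ_0 = id, Φ_1, …, Φ_{n-1}` intertwine `d_t` with `μ` modulo `t ^ n`, and let `g` be the
coefficient of `t ^ n` in `Φ_t ∘ d_t - μ ∘ (Φ_t ⊗ Φ_t)`. Apply `Φ_t` to the deformation equation
and read off the coefficient of `t ^ n`: the terms built from `μ` and the `Φ_i` alone are
transported BiHom-associators, which cancel in pairs by left alternativity, and what remains is
`δ²g`. So `g` is a 2-cocycle, hence `g = δ¹h`, and `Φ_n := h` removes the defect at order `n`.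
-/

theorem IsLinearMap.map_finset_sum {R M N ι : Type*} [Semiring R] [AddCommMonoid M]
    [AddCommMonoid N] [Module R M] [Module R N] {f : M → N} (hf : IsLinearMap R f)
    (s : Finset ι) (g : ι → M) : f (∑ i ∈ s, g i) = ∑ i ∈ s, f (g i) :=
  map_sum (IsLinearMap.mk' f hf) g s

namespace BiHomDeformation

open Finset

section AntidiagonalSums

variable {M : Type*} [AddCommMonoid M]

theorem sum_antidiagonal_assoc (n : ℕ) (f : ℕ → ℕ → ℕ → M) :
    ∑ p ∈ antidiagonal n, ∑ q ∈ antidiagonal p.2, f p.1 q.1 q.2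
      = ∑ p ∈ antidiagonal n, ∑ q ∈ antidiagonal p.1, f q.1 q.2 p.2 := by
  simp only [sum_sigma']
  apply sum_nbij' (fun ⟨⟨a, _⟩, ⟨b, c⟩⟩ ↦ ⟨(a + b, c), (a, b)⟩)
    (fun ⟨⟨_, c⟩, ⟨a, b⟩⟩ ↦ ⟨(a, b + c), (b, c)⟩) <;> aesop (add simp [add_assoc])

theorem sum_antidiagonal_comm₁₂ (n : ℕ) (f : ℕ → ℕ → ℕ → M) :
    ∑ p ∈ antidiagonal n, ∑ q ∈ antidiagonal p.1, f q.1 q.2 p.2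
      = ∑ p ∈ antidiagonal n, ∑ q ∈ antidiagonal p.1, f q.2 q.1 p.2 :=
  sum_congr rfl fun p _ ↦ (Nat.sum_antidiagonal_swap (f := fun q ↦ f q.1 q.2 p.2)).symm

theorem sum_antidiagonal_comm₂₃ (n : ℕ) (f : ℕ → ℕ → ℕ → M) :
    ∑ p ∈ antidiagonal n, ∑ q ∈ antidiagonal p.1, f q.1 p.2 q.2
      = ∑ p ∈ antidiagonal n, ∑ q ∈ antidiagonal p.1, f q.1 q.2 p.2 := by
  rw [← sum_antidiagonal_assoc n (fun a b c ↦ f a c b), ← sum_antidiagonal_assoc n f]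
  exact sum_congr rfl fun p _ ↦ Nat.sum_antidiagonal_swap (f := fun q ↦ f p.1 q.1 q.2)

theorem sum_antidiagonal_ite_fst (n : ℕ) (F : ℕ → M) :
    ∑ p ∈ antidiagonal n, (if p.1 = n then F p.2 else 0) = F 0 := by
  rw [sum_eq_single_of_mem (n, 0) (by simp) fun p hp hne ↦ if_neg ?_]
  · simp
  · rw [HasAntidiagonal.mem_antidiagonal] at hp
    exact fun h ↦ hne (Prod.ext h (by omega))

theorem sum_antidiagonal_ite_snd (n : ℕ) (F : ℕ → M) :
    ∑ p ∈ antidiagonal n, (if p.2 = n then F p.1 else 0) = F 0 := by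
  rw [← Nat.sum_antidiagonal_swap]
  exact sum_antidiagonal_ite_fst n F

end AntidiagonalSums

variable {K : Type*} [Field K] {A : Type*} [AddCommGroup A] [Module K A]

structure IsAdjCochain1 (K : Type*) {A : Type*} [Field K] [AddCommGroup A] [Module K A]
    (α β : A → A) (h : A → A) : Prop where
  lin : IsLinearMap K h
  equiv_a : ∀ x, h (α x) = α (h x)
  equiv_b : ∀ x, h (β x) = β (h x)

def delta1adj (mul : A → A → A) (h : A → A) (x y : A) : A :=
  mul x (h y) + mul (h x) y - h (mul x y)

/-- The coefficient of `t ^ n` in `Φ_t (d_t (x, y)) - μ (Φ_t x, Φ_t y)`, where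
`Φ_t = ∑ P_i t ^ i` and `d_t = ∑ d_i t ^ i`. -/
def obstruction (mul : A → A → A) (d : ℕ → A → A → A) (P : ℕ → A → A) (n : ℕ)
    (x y : A) : A :=
  ∑ p ∈ antidiagonal n, P p.1 (d p.2 x y) - ∑ p ∈ antidiagonal n, mul (P p.1 x) (P p.2 y)

def IsEquivBelow (mul : A → A → A) (d : ℕ → A → A → A) (P : ℕ → A → A) (n : ℕ) :
    Prop :=
  ∀ s < n, ∀ x y, ∑ p ∈ antidiagonal s, P p.1 (d p.2 x y)
    = ∑ p ∈ antidiagonal s, mul (P p.1 x) (P p.2 y)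

def truncate (Φ : ℕ → A → A) (n : ℕ) : ℕ → A → A :=
  fun m ↦ if m < n then Φ m else 0

variable {mul : A → A → A} {α β : A → A} {d : ℕ → A → A → A} {P : ℕ → A → A}
  {n : ℕ}

theorem sum_comp_eq_sum_mul_add_ite (hlow : IsEquivBelow mul d P n) {s : ℕ} (hs : s ≤ n)
    (u v : A) :
    ∑ q ∈ antidiagonal s, P q.1 (d q.2 u v)
      = ∑ q ∈ antidiagonal s, mul (P q.1 u) (P q.2 v)
        + if s = n then obstruction mul d P n u v else 0 := by
  rcases hs.lt_or_eq with hs | rfl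
  · rw [if_neg hs.ne, add_zero, hlow s hs]
  · rw [if_pos rfl, obstruction, add_sub_cancel]

theorem sum_comp_comp_left (hmul : ∀ w, IsLinearMap K fun x ↦ mul x w) (hd0 : d 0 = mul)
    (hP0 : P 0 = id) (hlow : IsEquivBelow mul d P n) (u v w : A) :
    ∑ p ∈ antidiagonal n, ∑ q ∈ antidiagonal p.2, P p.1 (d q.1 (d q.2 u v) w)
      = ∑ p ∈ antidiagonal n, ∑ q ∈ antidiagonal p.1,
          mul (mul (P q.1 u) (P q.2 v)) (P p.2 w)
        + mul (obstruction mul d P n u v) w + obstruction mul d P n (mul u v) w := by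
  have hcomp := fun {s} (hs : s ≤ n) ↦ sum_comp_eq_sum_mul_add_ite hlow hs
  calc _ = ∑ p ∈ antidiagonal n, ∑ q ∈ antidiagonal p.1, P q.1 (d q.2 (d p.2 u v) w) :=
        sum_antidiagonal_assoc n fun a b c ↦ P a (d b (d c u v) w)
    _ = ∑ p ∈ antidiagonal n, (∑ q ∈ antidiagonal p.1, mul (P q.1 (d p.2 u v)) (P q.2 w)
          + if p.1 = n then obstruction mul d P n (d p.2 u v) w else 0) :=
        sum_congr rfl fun p hp ↦ hcomp (HasAntidiagonal.antidiagonal.fst_le hp) _ _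
    _ = ∑ p ∈ antidiagonal n, mul (∑ q ∈ antidiagonal p.1, P q.1 (d q.2 u v)) (P p.2 w)
          + obstruction mul d P n (mul u v) w := by
        simp only [(hmul _).map_finset_sum]
        rw [sum_add_distrib, sum_antidiagonal_ite_fst n fun j ↦ obstruction mul d P n (d j u v) w,
          hd0, sum_antidiagonal_comm₂₃ n fun a b c ↦ mul (P a (d b u v)) (P c w)]
    _ = ∑ p ∈ antidiagonal n, (∑ q ∈ antidiagonal p.1,
            mul (mul (P q.1 u) (P q.2 v)) (P p.2 w)
          + if p.1 = n then mul (obstruction mul d P n u v) (P p.2 w) else 0)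
          + obstruction mul d P n (mul u v) w := by
        congr 1
        refine sum_congr rfl fun p hp ↦ ?_
        rw [hcomp (HasAntidiagonal.antidiagonal.fst_le hp), (hmul _).map_add,
          (hmul _).map_finset_sum, apply_ite (mul · (P p.2 w)), (hmul _).map_zero]
    _ = _ := by
      rw [sum_add_distrib,
        sum_antidiagonal_ite_fst n fun j ↦ mul (obstruction mul d P n u v) (P j w), hP0, id]

theorem sum_comp_comp_right (hmul : ∀ w, IsLinearMap K (mul w)) (hd0 : d 0 = mul)
    (hP0 : P 0 = id) (hlow : IsEquivBelow mul d P n) (u v w : A) :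
    ∑ p ∈ antidiagonal n, ∑ q ∈ antidiagonal p.2, P p.1 (d q.1 u (d q.2 v w))
      = ∑ p ∈ antidiagonal n, ∑ q ∈ antidiagonal p.1,
          mul (P q.1 u) (mul (P q.2 v) (P p.2 w))
        + mul u (obstruction mul d P n v w) + obstruction mul d P n u (mul v w) := by
  have hcomp := fun {s} (hs : s ≤ n) ↦ sum_comp_eq_sum_mul_add_ite hlow hs
  calc _ = ∑ p ∈ antidiagonal n, ∑ q ∈ antidiagonal p.1, P q.1 (d q.2 u (d p.2 v w)) :=
        sum_antidiagonal_assoc n fun a b c ↦ P a (d b u (d c v w))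
    _ = ∑ p ∈ antidiagonal n, (∑ q ∈ antidiagonal p.1, mul (P q.1 u) (P q.2 (d p.2 v w))
          + if p.1 = n then obstruction mul d P n u (d p.2 v w) else 0) :=
        sum_congr rfl fun p hp ↦ hcomp (HasAntidiagonal.antidiagonal.fst_le hp) _ _
    _ = ∑ p ∈ antidiagonal n, mul (P p.1 u) (∑ q ∈ antidiagonal p.2, P q.1 (d q.2 v w))
          + obstruction mul d P n u (mul v w) := by
        simp only [(hmul _).map_finset_sum]
        rw [sum_add_distrib, sum_antidiagonal_ite_fst n fun j ↦ obstruction mul d P n u (d j v w),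
          hd0, ← sum_antidiagonal_assoc n fun a b c ↦ mul (P a u) (P b (d c v w))]
    _ = ∑ p ∈ antidiagonal n, (∑ q ∈ antidiagonal p.2,
            mul (P p.1 u) (mul (P q.1 v) (P q.2 w))
          + if p.2 = n then mul (P p.1 u) (obstruction mul d P n v w) else 0)
          + obstruction mul d P n u (mul v w) := by
        congr 1
        refine sum_congr rfl fun p hp ↦ ?_
        rw [hcomp (HasAntidiagonal.antidiagonal.snd_le hp), (hmul _).map_add,
          (hmul _).map_finset_sum, apply_ite (mul (P p.1 u)), (hmul _).map_zero]
    _ = _ := by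
      rw [sum_add_distrib,
        sum_antidiagonal_ite_snd n fun j ↦ mul (P j u) (obstruction mul d P n v w), hP0, id,
        sum_antidiagonal_assoc n fun a b c ↦ mul (P a u) (mul (P b v) (P c w))]

theorem sum_biAssoc_add_swap_eq_zero (halg : IsLeftBiHomAlt K mul α β) (x y z : A) :
    ∑ p ∈ antidiagonal n, ∑ q ∈ antidiagonal p.1,
        biAssoc mul α β (β (P q.1 x)) (α (P q.2 y)) (P p.2 z)
      + ∑ p ∈ antidiagonal n, ∑ q ∈ antidiagonal p.1,
        biAssoc mul α β (β (P q.1 y)) (α (P q.2 x)) (P p.2 z) = 0 := by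
  rw [sum_antidiagonal_comm₁₂ n
    fun a b c ↦ biAssoc mul α β (β (P a y)) (α (P b x)) (P c z), ← sum_add_distrib]
  exact sum_eq_zero fun p _ ↦ by
    rw [← sum_add_distrib]
    exact sum_eq_zero fun q _ ↦ halg.left_alt _ _ _

theorem delta2adj_obstruction_eq_zero (halg : IsLeftBiHomAlt K mul α β)
    (hd : IsFormalDeformation K mul α β d) (hP : ∀ m, IsAdjCochain1 K α β (P m))
    (hP0 : P 0 = id) (hlow : IsEquivBelow mul d P n) (x y z : A) :
    delta2adj mul α β (obstruction mul d P n) x y z = 0 := by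
  set g := obstruction mul d P n
  have hterm : ∀ x y : A,
      ∑ p ∈ antidiagonal n, ∑ q ∈ antidiagonal p.1,
          biAssoc mul α β (β (P q.1 x)) (α (P q.2 y)) (P p.2 z)
        = ∑ p ∈ antidiagonal n, ∑ q ∈ antidiagonal p.2,
            P p.1 (d q.1 (d q.2 (β x) (α y)) (β z))
          - ∑ p ∈ antidiagonal n, ∑ q ∈ antidiagonal p.2,
            P p.1 (d q.1 (α (β x)) (d q.2 (α y) z))
          - (mul (g (β x) (α y)) (β z) - mul (α (β x)) (g (α y) z)
            + g (mul (β x) (α y)) (β z) - g (α (β x)) (mul (α y) z)) := by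
    intro x y
    rw [sum_comp_comp_left halg.mul_lin_left hd.d_zero hP0 hlow,
      sum_comp_comp_right halg.mul_lin_right hd.d_zero hP0 hlow]
    simp only [biAssoc, sum_sub_distrib, (hP _).equiv_a, (hP _).equiv_b]
    abel
  have hdeform : ∑ p ∈ antidiagonal n,
      P p.1 (∑ q ∈ antidiagonal p.2, diamond α β (d q.1) (d q.2) x y z) = 0 :=
    sum_eq_zero fun p _ ↦ by rw [hd.deform_eq, (hP p.1).lin.map_zero]
  simp only [diamond, (hP _).lin.map_finset_sum, (hP _).lin.map_add, (hP _).lin.map_sub,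
    sum_add_distrib, sum_sub_distrib] at hdeform
  have hassoc := sum_biAssoc_add_swap_eq_zero (P := P) (n := n) halg x y z
  rw [hterm x y, hterm y x] at hassoc
  unfold delta2adj
  linear_combination (norm := abel) hdeform - hassoc

theorem obstruction_map {γ : A → A} (hγ : IsLinearMap K γ)
    (hγmul : ∀ x y, γ (mul x y) = mul (γ x) (γ y))
    (hγd : ∀ i x y, d i (γ x) (γ y) = γ (d i x y)) (hγP : ∀ m x, P m (γ x) = γ (P m x))
    (x y : A) :
    obstruction mul d P n (γ x) (γ y) = γ (obstruction mul d P n x y) := by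
  simp only [obstruction, hγd, hγP, ← hγmul, hγ.map_sub, hγ.map_finset_sum]

theorem isLinearMap_obstruction_left (hmul : ∀ w, IsLinearMap K fun x ↦ mul x w)
    (hdlin : ∀ i y, IsLinearMap K fun x ↦ d i x y) (hP : ∀ m, IsLinearMap K (P m)) (y : A) :
    IsLinearMap K fun x ↦ obstruction mul d P n x y := by
  constructor
  · intro x x'
    simp only [obstruction, (hdlin _ _).map_add, (hP _).map_add, (hmul _).map_add, sum_add_distrib]
    abel
  · intro c x
    simp only [obstruction, (hdlin _ _).map_smul, (hP _).map_smul, (hmul _).map_smul, ← smul_sum,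
      smul_sub]

theorem isLinearMap_obstruction_right (hmul : ∀ w, IsLinearMap K (mul w))
    (hdlin : ∀ i x, IsLinearMap K (d i x)) (hP : ∀ m, IsLinearMap K (P m)) (x : A) :
    IsLinearMap K (obstruction mul d P n x) := by
  constructor
  · intro y y'
    simp only [obstruction, (hdlin _ _).map_add, (hP _).map_add, (hmul _).map_add, sum_add_distrib]
    abel
  · intro c y
    simp only [obstruction, (hdlin _ _).map_smul, (hP _).map_smul, (hmul _).map_smul, ← smul_sum,
      smul_sub]

theorem isAdjCochain2_obstruction (halg : IsBiHomAlg K mul α β)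
    (hd : IsFormalDeformation K mul α β d) (hP : ∀ m, IsAdjCochain1 K α β (P m)) :
    IsAdjCochain2 K α β (obstruction mul d P n) where
  lin_left :=
    isLinearMap_obstruction_left halg.mul_lin_left hd.lin_left fun m ↦ (hP m).lin
  lin_right :=
    isLinearMap_obstruction_right halg.mul_lin_right hd.lin_right fun m ↦ (hP m).lin
  equiv_a :=
    obstruction_map halg.alpha_lin halg.alpha_mul hd.equiv_a fun m ↦ (hP m).equiv_a
  equiv_b :=
    obstruction_map halg.beta_lin halg.beta_mul hd.equiv_b fun m ↦ (hP m).equiv_b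

section Truncate

variable {Φ : ℕ → A → A} {m : ℕ}

theorem truncate_of_lt (h : m < n) : truncate Φ n m = Φ m := if_pos h

theorem truncate_self : truncate Φ n n = 0 := if_neg (lt_irrefl n)

theorem isAdjCochain1_truncate (hα : IsLinearMap K α) (hβ : IsLinearMap K β)
    (hΦ : ∀ m < n, IsAdjCochain1 K α β (Φ m)) (m : ℕ) :
    IsAdjCochain1 K α β (truncate Φ n m) := by
  unfold truncate
  split_ifs with hm
  · exact hΦ m hm
  · exact ⟨LinearMap.isLinear 0, fun _ ↦ hα.map_zero.symm, fun _ ↦ hβ.map_zero.symm⟩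

theorem sum_comp_truncate (x y : A) :
    ∑ p ∈ antidiagonal n, Φ p.1 (d p.2 x y)
      = ∑ p ∈ antidiagonal n, truncate Φ n p.1 (d p.2 x y) + Φ n (d 0 x y) := by
  rw [← sum_antidiagonal_ite_fst n fun j ↦ Φ n (d j x y), ← sum_add_distrib]
  refine sum_congr rfl fun p hp ↦ ?_
  rcases (HasAntidiagonal.antidiagonal.fst_le hp).lt_or_eq with h | h
  · rw [truncate_of_lt h, if_neg h.ne, add_zero]
  · rw [h, truncate_self, if_pos rfl, Pi.zero_apply, zero_add]

theorem sum_mul_truncate (hzero_mul : ∀ w, mul 0 w = 0) (hmul_zero : ∀ w, mul w 0 = 0)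
    (hΦ0 : Φ 0 = id) (hn : 0 < n) (x y : A) :
    ∑ p ∈ antidiagonal n, mul (Φ p.1 x) (Φ p.2 y)
      = ∑ p ∈ antidiagonal n, mul (truncate Φ n p.1 x) (truncate Φ n p.2 y)
        + (mul (Φ n x) y + mul x (Φ n y)) := by
  have hends : mul (Φ n x) y + mul x (Φ n y)
      = ∑ p ∈ antidiagonal n, (if p.1 = n then mul (Φ n x) (Φ p.2 y) else 0)
        + ∑ p ∈ antidiagonal n, (if p.2 = n then mul (Φ p.1 x) (Φ n y) else 0) := by
    rw [sum_antidiagonal_ite_fst n fun j ↦ mul (Φ n x) (Φ j y),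
      sum_antidiagonal_ite_snd n fun j ↦ mul (Φ j x) (Φ n y), hΦ0, id, id]
  rw [hends, ← sum_add_distrib, ← sum_add_distrib]
  refine sum_congr rfl fun ⟨a, b⟩ hp ↦ ?_
  have hab : a + b = n := HasAntidiagonal.mem_antidiagonal.mp hp
  by_cases ha : a = n
  · obtain rfl : b = 0 := by omega
    subst ha
    rw [truncate_self, truncate_of_lt hn, if_pos rfl, if_neg hn.ne, Pi.zero_apply, hzero_mul,
      zero_add, add_zero]
  by_cases hb : b = n
  · obtain rfl : a = 0 := by omega
    subst hb
    rw [truncate_self, truncate_of_lt hn, if_pos rfl, if_neg hn.ne, Pi.zero_apply, hmul_zero,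
      zero_add, zero_add]
  rw [truncate_of_lt (by omega), truncate_of_lt (by omega), if_neg ha, if_neg hb, add_zero,
    add_zero]

theorem obstruction_truncate (hzero_mul : ∀ w, mul 0 w = 0) (hmul_zero : ∀ w, mul w 0 = 0)
    (hd0 : d 0 = mul) (hΦ0 : Φ 0 = id) (hn : 0 < n) (x y : A) :
    obstruction mul d (truncate Φ n) n x y
      = ∑ p ∈ antidiagonal n, Φ p.1 (d p.2 x y)
          - ∑ p ∈ antidiagonal n, mul (Φ p.1 x) (Φ p.2 y) + delta1adj mul (Φ n) x y := by
  rw [obstruction, sum_comp_truncate (Φ := Φ), sum_mul_truncate hzero_mul hmul_zero hΦ0 hn, hd0,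
    delta1adj]
  abel

theorem isEquivBelow_truncate (h : IsEquivBelow mul d Φ n) :
    IsEquivBelow mul d (truncate Φ n) n := by
  intro s hs x y
  have htr : ∀ m ≤ s, truncate Φ n m = Φ m := fun m hm ↦ truncate_of_lt (hm.trans_lt hs)
  refine (sum_congr rfl fun p hp ↦ ?_).trans ((h s hs x y).trans (sum_congr rfl fun p hp ↦ ?_))
  · rw [htr _ (HasAntidiagonal.antidiagonal.fst_le hp)]
  · rw [htr _ (HasAntidiagonal.antidiagonal.fst_le hp),
      htr _ (HasAntidiagonal.antidiagonal.snd_le hp)]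

end Truncate

variable (K mul α β d) in
noncomputable def equivSeq : ℕ → A → A
  | 0 => id
  | n + 1 => Classical.epsilon fun h ↦ IsAdjCochain1 K α β h ∧ ∀ x y,
      obstruction mul d (fun m ↦ if _ : m < n + 1 then equivSeq m else 0) (n + 1) x y
        = delta1adj mul h x y

variable (K mul α β d) in
theorem equivSeq_zero : equivSeq K mul α β d 0 = id := by
  rw [equivSeq]

theorem equivSeq_succ (n : ℕ) :
    equivSeq K mul α β d (n + 1)
      = Classical.epsilon fun h ↦ IsAdjCochain1 K α β h ∧ ∀ x y,
      obstruction mul d (truncate (equivSeq K mul α β d) (n + 1)) (n + 1) x y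
        = delta1adj mul h x y := by
  rw [equivSeq]
  rfl

theorem equivSeq_spec (halg : IsLeftBiHomAlt K mul α β) (hd : IsFormalDeformation K mul α β d)
    (H2 : ∀ g : A → A → A, IsAdjCochain2 K α β g →
      (∀ x y z, delta2adj mul α β g x y z = 0) →
      ∃ h, IsAdjCochain1 K α β h ∧ ∀ x y, g x y = delta1adj mul h x y)
    (n : ℕ) :
    IsAdjCochain1 K α β (equivSeq K mul α β d n) ∧ ∀ x y,
      ∑ p ∈ antidiagonal n, equivSeq K mul α β d p.1 (d p.2 x y)
        = ∑ p ∈ antidiagonal n,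
            mul (equivSeq K mul α β d p.1 x) (equivSeq K mul α β d p.2 y) := by
  induction n using Nat.strong_induction_on with
  | _ n ih =>
  cases n with
  | zero =>
    rw [equivSeq_zero K mul α β d]
    refine ⟨⟨LinearMap.id.isLinear, fun _ ↦ rfl, fun _ ↦ rfl⟩, fun x y ↦ ?_⟩
    simp [equivSeq_zero K mul α β d, hd.d_zero]
  | succ n =>
    have hP : ∀ m, IsAdjCochain1 K α β (truncate (equivSeq K mul α β d) (n + 1) m) :=
      isAdjCochain1_truncate halg.alpha_lin halg.beta_lin fun m hm ↦ (ih m hm).1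
    have hP0 : truncate (equivSeq K mul α β d) (n + 1) 0 = id :=
      (truncate_of_lt n.succ_pos).trans (equivSeq_zero K mul α β d)
    have hlow := isEquivBelow_truncate fun s hs ↦ (ih s hs).2
    have hspec := Classical.epsilon_spec (H2 _ (isAdjCochain2_obstruction halg.toIsBiHomAlg hd hP)
      (delta2adj_obstruction_eq_zero halg hd hP hP0 hlow))
    rw [← equivSeq_succ] at hspec
    refine ⟨hspec.1, fun x y ↦ ?_⟩
    have h := obstruction_truncate (fun w ↦ (halg.mul_lin_left w).map_zero)
      (fun w ↦ (halg.mul_lin_right w).map_zero) hd.d_zero (equivSeq_zero K mul α β d)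
      n.zero_lt_succ x y
    rw [hspec.2, right_eq_add, sub_eq_zero] at h
    exact h

end BiHomDeformation

theorem rigid_of_H2_trivial_general
    (K : Type*) [Field K] {A : Type*} [AddCommGroup A] [Module K A]
    (mul : A → A → A) (α β : A → A) (halg : IsLeftBiHomAlt K mul α β)
    (H2 : ∀ g : A → A → A, IsAdjCochain2 K α β g →
      (∀ x y z, delta2adj mul α β g x y z = 0) →
      ∃ h : A → A, IsLinearMap K h ∧ (∀ x, h (α x) = α (h x)) ∧
        (∀ x, h (β x) = β (h x)) ∧
        ∀ x y, g x y = mul x (h y) + mul (h x) y - h (mul x y)) :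
    ∀ d : ℕ → A → A → A, IsFormalDeformation K mul α β d →
      ∃ Φ : ℕ → A → A, (∀ i, IsLinearMap K (Φ i)) ∧ Φ 0 = id ∧
        (∀ i x, Φ i (α x) = α (Φ i x)) ∧ (∀ i x, Φ i (β x) = β (Φ i x)) ∧
        ∀ n x y, ∑ p ∈ Finset.HasAntidiagonal.antidiagonal n, Φ p.1 (d p.2 x y)
          = ∑ p ∈ Finset.HasAntidiagonal.antidiagonal n, mul (Φ p.1 x) (Φ p.2 y) := by
  intro d hd
  have hΦ := BiHomDeformation.equivSeq_spec halg hd fun g hg hδg ↦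
    let ⟨h, hlin, hα, hβ, hgh⟩ := H2 g hg hδg
    ⟨h, ⟨hlin, hα, hβ⟩, hgh⟩
  exact ⟨BiHomDeformation.equivSeq K mul α β d, fun i ↦ (hΦ i).1.lin,
    BiHomDeformation.equivSeq_zero K mul α β d, fun i ↦ (hΦ i).1.equiv_a,
    fun i ↦ (hΦ i).1.equiv_b, fun n ↦ (hΦ n).2⟩

/-- If every 2-cocycle with coefficients in the adjoint representation is a
1-coboundary, then the left BiHom-alternative algebra is analytically rigid:
every formal deformation is equivalent to the null deformation. -/
theorem rigid_of_H2_trivial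
    (K : Type*) [Field K] [CharZero K] {A : Type*} [AddCommGroup A] [Module K A]
    (mul : A → A → A) (α β : A → A) (halg : IsLeftBiHomAlt K mul α β)
    (H2 : ∀ g : A → A → A, IsAdjCochain2 K α β g →
      (∀ x y z, delta2adj mul α β g x y z = 0) →
      ∃ h : A → A, IsLinearMap K h ∧ (∀ x, h (α x) = α (h x)) ∧
        (∀ x, h (β x) = β (h x)) ∧
        ∀ x y, g x y = mul x (h y) + mul (h x) y - h (mul x y)) :
    ∀ d : ℕ → A → A → A, IsFormalDeformation K mul α β d →
      ∃ Φ : ℕ → A → A, (∀ i, IsLinearMap K (Φ i)) ∧ Φ 0 = id ∧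
        (∀ i x, Φ i (α x) = α (Φ i x)) ∧ (∀ i x, Φ i (β x) = β (Φ i x)) ∧
        ∀ n x y, ∑ p ∈ Finset.HasAntidiagonal.antidiagonal n, Φ p.1 (d p.2 x y)
          = ∑ p ∈ Finset.HasAntidiagonal.antidiagonal n, mul (Φ p.1 x) (Φ p.2 y) :=
  rigid_of_H2_trivial_general K mul α β halg H2
end

section
/- Let (V, ℓ, r, φ, ψ) be a representation of a BiHom-alternative algebra (A, μ, α, β) with α, β, φ, ψ invertible. Then the dual tuple (V*, r^⋆, ℓ^⋆, (φ⁻¹)*, (ψ⁻¹)*) — i.e. the tuple whose left-action maps are r^⋆, whose right-action maps are ℓ^⋆, and whose structure maps are the transposes (φ⁻¹)* and (ψ⁻¹)* — is a representation of (A, μ, α, β). -/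
/-- A BiHom-alternative algebra. -/
structure IsBiHomAlt (K : Type*) {A : Type*} [Field K] [AddCommGroup A] [Module K A]
    (mul : A → A → A) (α β : A → A) extends IsBiHomAlg K mul α β : Prop where
  left_alt : ∀ x y z,
    biAssoc mul α β (β x) (α y) z + biAssoc mul α β (β y) (α x) z = 0
  right_alt : ∀ x y z,
    biAssoc mul α β x (β y) (α z) + biAssoc mul α β x (β z) (α y) = 0

/-!
Transposition reverses the order of composition, so every axiom of the dual tuple is the
transpose of an identity on `V`. Pushing all of `φ⁻¹, ψ⁻¹` to the right through `ℓ, r` (and all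
of `α⁻¹, β⁻¹` into the arguments) turns these identities into instances of the axioms of `V`:
axioms (v) and (vi) of the dual are (vi) and (v) of `V`, axiom (viii) of the dual is (vii) plus
the polarization of (vi), and axiom (vii) of the dual is (viii) plus the flexibility of `V`,
namely that `r(α²βy)ℓ(β²x) − ℓ(αβ²x)r(α²y)` is antisymmetric in `x, y`, which follows from two
instances of (vii) and polarized (vi).
-/

section

variable {K A V : Type*} [Field K] [AddCommGroup A] [Module K A] [AddCommGroup V] [Module K V]
  {mul : A → A → A} {α β : A ≃ₗ[K] A}

namespace IsBiHomAlg

variable (halg : IsBiHomAlg K mul α β) (x y : A)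
include halg

theorem alpha_symm_beta_comm : α.symm (β x) = β (α.symm x) := by
  rw [LinearEquiv.symm_apply_eq, halg.alpha_beta_comm, α.apply_symm_apply]

theorem alpha_beta_symm_comm : α (β.symm x) = β.symm (α x) := by
  rw [eq_comm, LinearEquiv.symm_apply_eq, ← halg.alpha_beta_comm, β.apply_symm_apply]

theorem alpha_symm_beta_symm_comm : α.symm (β.symm x) = β.symm (α.symm x) := by
  rw [LinearEquiv.symm_apply_eq, halg.alpha_beta_symm_comm, α.apply_symm_apply]

theorem alpha_symm_mul : α.symm (mul x y) = mul (α.symm x) (α.symm y) := by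
  rw [LinearEquiv.symm_apply_eq, halg.alpha_mul, α.apply_symm_apply, α.apply_symm_apply]

theorem beta_symm_mul : β.symm (mul x y) = mul (β.symm x) (β.symm y) := by
  rw [LinearEquiv.symm_apply_eq, halg.beta_mul, β.apply_symm_apply, β.apply_symm_apply]

end IsBiHomAlg

namespace IsBiHomRep

variable {l r : A → Module.End K V} {φ ψ : V ≃ₗ[K] V}
  (hrep : IsBiHomRep K mul α β l r φ ψ)
include hrep

section

variable (x y : A) (v : V)

theorem phi_symm_l : φ.symm (l x v) = l (α.symm x) (φ.symm v) := by
  rw [LinearEquiv.symm_apply_eq]; simpa using (hrep.phi_l (α.symm x) (φ.symm v)).symm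

theorem phi_symm_r : φ.symm (r x v) = r (α.symm x) (φ.symm v) := by
  rw [LinearEquiv.symm_apply_eq]; simpa using (hrep.phi_r (α.symm x) (φ.symm v)).symm

theorem psi_symm_l : ψ.symm (l x v) = l (β.symm x) (ψ.symm v) := by
  rw [LinearEquiv.symm_apply_eq]; simpa using (hrep.psi_l (β.symm x) (ψ.symm v)).symm

theorem psi_symm_r : ψ.symm (r x v) = r (β.symm x) (ψ.symm v) := by
  rw [LinearEquiv.symm_apply_eq]; simpa using (hrep.psi_r (β.symm x) (ψ.symm v)).symm

theorem psi_phi_symm_comm : ψ (φ.symm v) = φ.symm (ψ v) := by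
  rw [eq_comm, LinearEquiv.symm_apply_eq]; simpa using (hrep.phi_psi_comm (φ.symm v)).symm

theorem psi_symm_phi_symm_comm : ψ.symm (φ.symm v) = φ.symm (ψ.symm v) := by
  rw [LinearEquiv.symm_apply_eq, hrep.psi_phi_symm_comm, ψ.apply_symm_apply]

theorem rep1_symm : l (mul (β x) (α x)) v = l (α (β x)) (l (α x) (ψ.symm v)) := by
  simpa using hrep.rep1 x (ψ.symm v)

theorem rep2_symm : r (mul (β x) (α x)) v = r (α (β x)) (r (β x) (φ.symm v)) := by
  simpa using hrep.rep2 x (φ.symm v)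

theorem rep3_symm : r (β y) (l (β x) (ψ.symm v)) - l (α (β x)) (r y (ψ.symm v))
    = r (mul (α x) y) v - r (β y) (r (α x) (φ.symm v)) := by
  simpa [hrep.psi_phi_symm_comm] using hrep.rep3 x y (φ.symm (ψ.symm v))

theorem rep4_symm : l (α y) (r (α x) (φ.symm v)) - r (α (β x)) (l y (φ.symm v))
    = l (mul y (β x)) v - l (α y) (l (β x) (ψ.symm v)) := by
  simpa [hrep.psi_phi_symm_comm] using hrep.rep4 x y (φ.symm (ψ.symm v))

end

variable (halg : IsBiHomAlg K mul α β)
include halg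

theorem rep2_symm_polarized (a b : A) (v : V) :
    r (mul (β a) (α b)) v + r (mul (β b) (α a)) v
      = r (α (β a)) (r (β b) (φ.symm v)) + r (α (β b)) (r (β a) (φ.symm v)) := by
  have hab := hrep.rep2_symm (a + b) v
  simp only [map_add, (halg.mul_lin_left _).map_add, (halg.mul_lin_right _).map_add,
    hrep.r_lin.map_add, LinearMap.add_apply] at hab
  linear_combination (norm := abel) hab - hrep.rep2_symm a v - hrep.rep2_symm b v

theorem flexible (a b : A) (w : V) :
    r (β (α (α b))) (l (β (β a)) w) - l (β (β (α a))) (r (α (α b)) w)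
      = l (β (β (α b))) (r (α (α a)) w) - r (β (α (α a))) (l (β (β b)) w) := by
  have hab := hrep.rep3_symm (β a) (α (α b)) (ψ w)
  have hba := hrep.rep3_symm (β b) (α (α a)) (ψ w)
  have hpol := hrep.rep2_symm_polarized halg (α a) (α b) (ψ w)
  simp only [halg.alpha_beta_comm, ψ.symm_apply_apply] at hab hba hpol
  linear_combination (norm := abel) hab + hba + hpol

end IsBiHomRep

def lStar (l : A → Module.End K V) (α β : A ≃ₗ[K] A) (φ ψ : V ≃ₗ[K] V) (x : A) :
    Module.End K (Module.Dual K V) :=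
  (l (α.symm (α.symm (β x))) ∘ₗ (φ.symm.toLinearMap ∘ₗ ψ.symm.toLinearMap)).dualMap

def rStar (r : A → Module.End K V) (α β : A ≃ₗ[K] A) (φ ψ : V ≃ₗ[K] V) (x : A) :
    Module.End K (Module.Dual K V) :=
  (r (α (β.symm (β.symm x))) ∘ₗ (φ.symm.toLinearMap ∘ₗ ψ.symm.toLinearMap)).dualMap

theorem lStar_apply (l : A → Module.End K V) (α β : A ≃ₗ[K] A) (φ ψ : V ≃ₗ[K] V) (x : A)
    (ξ : Module.Dual K V) (u : V) :
    lStar l α β φ ψ x ξ u = ξ (l (α.symm (α.symm (β x))) (φ.symm (ψ.symm u))) := rfl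

theorem rStar_apply (r : A → Module.End K V) (α β : A ≃ₗ[K] A) (φ ψ : V ≃ₗ[K] V) (x : A)
    (ξ : Module.Dual K V) (u : V) :
    rStar r α β φ ψ x ξ u = ξ (r (α (β.symm (β.symm x))) (φ.symm (ψ.symm u))) := rfl

theorem isLinearMap_dualMap_comp {f : A → Module.End K V} (hf : IsLinearMap K f)
    (g : A →ₗ[K] A) (P : Module.End K V) :
    IsLinearMap K fun x => (f (g x) ∘ₗ P).dualMap := by
  refine ⟨fun x y => ?_, fun c x => ?_⟩ <;> ext ξ u <;> simp [hf.map_add, hf.map_smul]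

theorem IsBiHomRep.dual {l r : A → Module.End K V} {φ ψ : V ≃ₗ[K] V}
    (hrep : IsBiHomRep K mul α β l r φ ψ) (halg : IsBiHomAlg K mul α β) :
    IsBiHomRep K mul α β (rStar r α β φ ψ) (lStar l α β φ ψ)
      φ.symm.toLinearMap.dualMap ψ.symm.toLinearMap.dualMap where
  l_lin := isLinearMap_dualMap_comp hrep.r_lin
    (α.toLinearMap ∘ₗ β.symm.toLinearMap ∘ₗ β.symm.toLinearMap) _
  r_lin := isLinearMap_dualMap_comp hrep.l_lin
    (α.symm.toLinearMap ∘ₗ α.symm.toLinearMap ∘ₗ β.toLinearMap) _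
  phi_psi_comm ξ := by
    ext u
    simp [hrep.psi_symm_phi_symm_comm]
  phi_l x ξ := by
    ext u
    simp [rStar_apply, hrep.phi_symm_r, hrep.psi_symm_phi_symm_comm, halg.alpha_beta_symm_comm,
      halg.alpha_symm_beta_symm_comm]
  phi_r x ξ := by
    ext u
    simp [lStar_apply, hrep.phi_symm_l, hrep.psi_symm_phi_symm_comm, halg.alpha_symm_beta_comm]
  psi_l x ξ := by
    ext u
    simp [rStar_apply, hrep.psi_symm_r, hrep.psi_symm_phi_symm_comm, halg.alpha_beta_symm_comm]
  psi_r x ξ := by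
    ext u
    simp [lStar_apply, hrep.psi_symm_l, hrep.psi_symm_phi_symm_comm, halg.alpha_symm_beta_comm]
  rep1 x ξ := by
    ext u
    simpa only [rStar_apply, LinearMap.dualMap_apply, LinearEquiv.coe_coe, hrep.phi_symm_r,
      hrep.psi_symm_r, hrep.psi_symm_phi_symm_comm, halg.alpha_beta_comm,
      halg.alpha_beta_symm_comm, halg.alpha_symm_beta_symm_comm, halg.alpha_mul, halg.beta_symm_mul,
      LinearEquiv.symm_apply_apply, LinearEquiv.apply_symm_apply] using
      congrArg ξ (hrep.rep2_symm (β.symm (β.symm (β.symm (α x)))) (φ.symm (ψ.symm (ψ.symm u))))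
  rep2 x ξ := by
    ext u
    simpa only [lStar_apply, LinearMap.dualMap_apply, LinearEquiv.coe_coe, hrep.phi_symm_l,
      hrep.psi_symm_l, hrep.psi_symm_phi_symm_comm, halg.alpha_beta_comm, halg.alpha_symm_beta_comm,
      halg.beta_mul, halg.alpha_symm_mul, LinearEquiv.symm_apply_apply,
      LinearEquiv.apply_symm_apply] using
      congrArg ξ (hrep.rep1_symm (β (α.symm (α.symm (α.symm x)))) (φ.symm (φ.symm (ψ.symm u))))
  rep3 x y ξ := by
    ext u
    have hrep4 := congrArg ξ <| hrep.rep4_symm (β.symm (α.symm (α.symm (α.symm y))))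
      (α.symm (α.symm x)) (φ.symm (φ.symm (ψ.symm (ψ.symm u))))
    have hflex := congrArg ξ <| hrep.flexible halg
      (α.symm (α.symm (α.symm (α.symm (β.symm y))))) (α.symm (α.symm (β.symm (β.symm x))))
      (φ.symm (φ.symm (φ.symm (ψ.symm (ψ.symm u)))))
    simp only [lStar_apply, rStar_apply, LinearMap.dualMap_apply, LinearEquiv.coe_coe,
      LinearMap.sub_apply, map_sub, hrep.phi_symm_l, hrep.phi_symm_r, hrep.psi_symm_l,
      hrep.psi_symm_r, hrep.psi_symm_phi_symm_comm, halg.alpha_beta_comm,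
      halg.alpha_symm_beta_comm, halg.alpha_beta_symm_comm, halg.alpha_symm_beta_symm_comm,
      halg.beta_mul, halg.alpha_symm_mul, halg.beta_symm_mul, LinearEquiv.symm_apply_apply,
      LinearEquiv.apply_symm_apply] at hrep4 hflex ⊢
    linear_combination hrep4 + hflex
  rep4 x y ξ := by
    ext u
    have hrep3 := congrArg ξ <| hrep.rep3_symm (α.symm (α.symm (β.symm x)))
      (α (β.symm (β.symm (β.symm (β.symm y))))) (φ.symm (φ.symm (ψ.symm (ψ.symm u))))
    have hpol := congrArg ξ <| hrep.rep2_symm_polarized halg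
      (β.symm (β.symm (β.symm (β.symm y)))) (α.symm (β.symm (β.symm x)))
      (φ.symm (φ.symm (ψ.symm (ψ.symm u))))
    simp only [lStar_apply, rStar_apply, LinearMap.dualMap_apply, LinearEquiv.coe_coe,
      LinearMap.sub_apply, map_sub, map_add, hrep.phi_symm_l, hrep.phi_symm_r, hrep.psi_symm_l,
      hrep.psi_symm_r, hrep.psi_symm_phi_symm_comm, halg.alpha_beta_comm,
      halg.alpha_symm_beta_comm, halg.alpha_beta_symm_comm, halg.alpha_symm_beta_symm_comm,
      halg.alpha_mul, halg.alpha_symm_mul, halg.beta_symm_mul, LinearEquiv.symm_apply_apply,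
      LinearEquiv.apply_symm_apply] at hrep3 hpol ⊢
    linear_combination -hrep3 - hpol

end

theorem dual_isBiHomRep_general
    (K : Type*) [Field K] {A V : Type*} [AddCommGroup A] [Module K A]
    [AddCommGroup V] [Module K V]
    (mul : A → A → A) (α β : A ≃ₗ[K] A) (halg : IsBiHomAlt K mul (⇑α) (⇑β))
    (l r : A → Module.End K V) (φ ψ : V ≃ₗ[K] V)
    (hrep : IsBiHomRep K mul (⇑α) (⇑β) l r φ.toLinearMap ψ.toLinearMap) :
    IsBiHomRep K mul (⇑α) (⇑β)
      (fun x => (r (α (β.symm (β.symm x))) ∘ₗ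
        (φ.symm.toLinearMap ∘ₗ ψ.symm.toLinearMap)).dualMap)
      (fun x => (l (α.symm (α.symm (β x))) ∘ₗ
        (φ.symm.toLinearMap ∘ₗ ψ.symm.toLinearMap)).dualMap)
      φ.symm.toLinearMap.dualMap ψ.symm.toLinearMap.dualMap :=
  hrep.dual halg.toIsBiHomAlg

/-- The dual representation: if `(V, ℓ, r, φ, ψ)` is a representation of a
BiHom-alternative algebra `(A, μ, α, β)` with `α, β, φ, ψ` invertible, then
`(V*, r^⋆, ℓ^⋆, (φ⁻¹)*, (ψ⁻¹)*)` is a representation of `(A, μ, α, β)`, where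
`⟨ℓ^⋆(x)(ξ), u⟩ = ⟨ξ, ℓ(α⁻²β(x))(φ⁻¹ψ⁻¹(u))⟩` and
`⟨r^⋆(x)(ξ), u⟩ = ⟨ξ, r(αβ⁻²(x))(φ⁻¹ψ⁻¹(u))⟩`. -/
theorem dual_isBiHomRep
    (K : Type*) [Field K] [CharZero K] {A V : Type*} [AddCommGroup A] [Module K A]
    [AddCommGroup V] [Module K V]
    (mul : A → A → A) (α β : A ≃ₗ[K] A) (halg : IsBiHomAlt K mul (⇑α) (⇑β))
    (l r : A → Module.End K V) (φ ψ : V ≃ₗ[K] V)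
    (hrep : IsBiHomRep K mul (⇑α) (⇑β) l r φ.toLinearMap ψ.toLinearMap) :
    IsBiHomRep K mul (⇑α) (⇑β)
      (fun x => (r (α (β.symm (β.symm x))) ∘ₗ
        (φ.symm.toLinearMap ∘ₗ ψ.symm.toLinearMap)).dualMap)
      (fun x => (l (α.symm (α.symm (β x))) ∘ₗ
        (φ.symm.toLinearMap ∘ₗ ψ.symm.toLinearMap)).dualMap)
      φ.symm.toLinearMap.dualMap ψ.symm.toLinearMap.dualMap :=
  dual_isBiHomRep_general K mul α β halg l r φ ψ hrep
end

section
/- Let (V, ℓ, r, φ, ψ) be a representation of a BiHom-alternative algebra (A, μ, α, β) with α, β, φ, ψ invertible. Let ev: V → V** denote the canonical evaluation map into the double dual. Then the double dual construction recovers ℓ∘α⁻³β³ and r∘α³β⁻³: for all x ∈ A and u ∈ V, ev(u) ∘ (φψ)* ∘ ℓ^⋆(α⁻¹β²(x)) = ev(ℓ(α⁻³β³(x))(u)) and ev(u) ∘ (φψ)* ∘ r^⋆(α²β⁻¹(x)) = ev(r(α³β⁻³(x))(u)) as elements of V**. -/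
/-! Transposing twice is evaluation: `ev(u) ∘ f* ∘ g* = ev(g(f u))`. With `f = φψ` and
`g = ℓ(y) φ⁻¹ψ⁻¹`, the commutation of `φ` and `ψ` cancels `φ⁻¹ψ⁻¹φψ`, and the commutation of
`α` and `β` (hence of `β` with `α⁻¹` and of `α` with `β⁻¹`) normalises the twisted argument
`α⁻¹α⁻¹βα⁻¹ββ x` to `α⁻³β³ x`, and `αβ⁻¹β⁻¹ααβ⁻¹ x` to `α³β⁻³ x`. -/

theorem Module.Dual.eval_comp_dualMap {R M N : Type*} [CommSemiring R] [AddCommMonoid M]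
    [Module R M] [AddCommMonoid N] [Module R N] (f : M →ₗ[R] N) (u : M) :
    Module.Dual.eval R M u ∘ₗ f.dualMap = Module.Dual.eval R N (f u) :=
  rfl

theorem Module.Dual.eval_comp_dualMap_comp_dualMap {R M N P : Type*} [CommSemiring R]
    [AddCommMonoid M] [Module R M] [AddCommMonoid N] [Module R N] [AddCommMonoid P] [Module R P]
    (f : M →ₗ[R] N) (g : N →ₗ[R] P) (u : M) :
    Module.Dual.eval R M u ∘ₗ (f.dualMap ∘ₗ g.dualMap) = Module.Dual.eval R P (g (f u)) := by
  rw [← LinearMap.comp_assoc, eval_comp_dualMap, eval_comp_dualMap]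

theorem LinearEquiv.leftInverse_symm_comp_symm_of_commute {R M : Type*} [Semiring R]
    [AddCommMonoid M] [Module R M] (φ ψ : M ≃ₗ[R] M) (h : Function.Commute φ ψ) :
    Function.LeftInverse (φ.symm ∘ ψ.symm) (φ ∘ ψ) := fun v => by
  simp [h v]

theorem LinearEquiv.commute_symm {R M : Type*} [Semiring R] [AddCommMonoid M] [Module R M]
    (f : M → M) (e : M ≃ₗ[R] M) (h : Function.Commute f e) : Function.Commute f e.symm :=
  h.semiconj.inverses_right e.right_inv e.left_inv

-- `(ℓ(α⁻²β y) ∘ₗ φ⁻¹ψ⁻¹).dualMap` is `ℓ^⋆(y)`, here at `y = α⁻¹β²x`; likewise for `r^⋆`.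
theorem double_dual_recovers_rep_general
    (K : Type*) [Field K] {A V : Type*} [AddCommGroup A] [Module K A]
    [AddCommGroup V] [Module K V]
    (mul : A → A → A) (α β : A ≃ₗ[K] A) (halg : IsBiHomAlt K mul (⇑α) (⇑β))
    (l r : A → Module.End K V) (φ ψ : V ≃ₗ[K] V)
    (hrep : IsBiHomRep K mul (⇑α) (⇑β) l r φ.toLinearMap ψ.toLinearMap) :
    ∀ (x : A) (u : V),
      ((Module.Dual.eval K V u) ∘ₗ
        ((φ.toLinearMap ∘ₗ ψ.toLinearMap).dualMap ∘ₗ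
          ((l (α.symm (α.symm (β (α.symm (β (β x)))))) ∘ₗ
            (φ.symm.toLinearMap ∘ₗ ψ.symm.toLinearMap)).dualMap))
        = Module.Dual.eval K V
            (l (α.symm (α.symm (α.symm (β (β (β x)))))) u)) ∧
      ((Module.Dual.eval K V u) ∘ₗ
        ((φ.toLinearMap ∘ₗ ψ.toLinearMap).dualMap ∘ₗ
          ((r (α (β.symm (β.symm (α (α (β.symm x)))))) ∘ₗ
            (φ.symm.toLinearMap ∘ₗ ψ.symm.toLinearMap)).dualMap))
        = Module.Dual.eval K V
            (r (α (α (α (β.symm (β.symm (β.symm x)))))) u)) := by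
  intro x u
  have hβα : Function.Commute β α.symm :=
    LinearEquiv.commute_symm _ α fun y => (halg.alpha_beta_comm y).symm
  have hαβ : Function.Commute α β.symm :=
    LinearEquiv.commute_symm _ β halg.alpha_beta_comm
  have hφψ : φ.symm (ψ.symm (φ (ψ u))) = u :=
    LinearEquiv.leftInverse_symm_comp_symm_of_commute φ ψ hrep.phi_psi_comm u
  simp only [Module.Dual.eval_comp_dualMap_comp_dualMap, LinearMap.comp_apply,
    LinearEquiv.coe_coe, hφψ, hβα.eq, hαβ.eq, and_self]

/-- The double dual construction recovers `ℓ∘α⁻³β³` and `r∘α³β⁻³`: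
`ev(u) ∘ (φψ)* ∘ ℓ^⋆(α⁻¹β²(x)) = ev(ℓ(α⁻³β³(x))(u))` and
`ev(u) ∘ (φψ)* ∘ r^⋆(α²β⁻¹(x)) = ev(r(α³β⁻³(x))(u))` in `V**`, where
`⟨ℓ^⋆(x)(ξ), u⟩ = ⟨ξ, ℓ(α⁻²β(x))(φ⁻¹ψ⁻¹(u))⟩` and
`⟨r^⋆(x)(ξ), u⟩ = ⟨ξ, r(αβ⁻²(x))(φ⁻¹ψ⁻¹(u))⟩`. -/
theorem double_dual_recovers_rep
    (K : Type*) [Field K] [CharZero K] {A V : Type*} [AddCommGroup A] [Module K A]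
    [AddCommGroup V] [Module K V]
    (mul : A → A → A) (α β : A ≃ₗ[K] A) (halg : IsBiHomAlt K mul (⇑α) (⇑β))
    (l r : A → Module.End K V) (φ ψ : V ≃ₗ[K] V)
    (hrep : IsBiHomRep K mul (⇑α) (⇑β) l r φ.toLinearMap ψ.toLinearMap) :
    ∀ (x : A) (u : V),
      ((Module.Dual.eval K V u) ∘ₗ
        ((φ.toLinearMap ∘ₗ ψ.toLinearMap).dualMap ∘ₗ
          ((l (α.symm (α.symm (β (α.symm (β (β x)))))) ∘ₗ
            (φ.symm.toLinearMap ∘ₗ ψ.symm.toLinearMap)).dualMap))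
        = Module.Dual.eval K V
            (l (α.symm (α.symm (α.symm (β (β (β x)))))) u)) ∧
      ((Module.Dual.eval K V u) ∘ₗ
        ((φ.toLinearMap ∘ₗ ψ.toLinearMap).dualMap ∘ₗ
          ((r (α (β.symm (β.symm (α (α (β.symm x)))))) ∘ₗ
            (φ.symm.toLinearMap ∘ₗ ψ.symm.toLinearMap)).dualMap))
        = Module.Dual.eval K V
            (r (α (α (α (β.symm (β.symm (β.symm x)))))) u)) :=
  double_dual_recovers_rep_general K mul α β halg l r φ ψ hrep
end

section
/- Let (A, μ, α, β) be a BiHom-alternative algebra, (V, ℓ, r, φ, ψ) a representation of it, and θ: A × A → V a bilinear map. Define on A ⊕ V the product (x+u) ∘ (y+v) = xy + ℓ(x)v + r(y)u + θ(x,y) and structure maps α+φ, β+ψ. Then (A ⊕ V, ∘, α+φ, β+ψ) is a BiHom-alternative algebra if and only if for all x, y, z ∈ A: (1) φ(θ(x,y)) = θ(α(x),α(y)) and ψ(θ(x,y)) = θ(β(x),β(y)); (2) θ(β(x)α(y),β(z)) + r(β(z))θ(β(x),α(y)) − θ(αβ(x),α(y)z) − ℓ(αβ(x))θ(α(y),z)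 + θ(β(y)α(x),β(z)) + r(β(z))θ(β(y),α(x)) − θ(αβ(y),α(x)z) − ℓ(αβ(y))θ(α(x),z) = 0; (3) θ(xβ(y),αβ(z)) + r(αβ(z))θ(x,β(y)) − θ(α(x),β(y)α(z)) − ℓ(α(x))θ(β(y),α(z)) + θ(xβ(z),αβ(y)) + r(αβ(y))θ(x,β(z)) − θ(α(x),β(z)α(y)) − ℓ(α(x))θ(β(z),α(y)) = 0. -/
/-!
The BiHom-associator of the extension has the associator of `A` as first component; its second
component is a sum of terms linear in the `V`-arguments plus the `θ`-part `thetaAssoc`. In both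
alternativity identities the linear terms cancel by the representation axioms (with `rep1`, `rep2`
polarized), so the extension is alternative exactly when the `θ`-parts vanish. Multiplicativity
of `α + φ` and `β + ψ` likewise reduces to `φ` and `ψ` intertwining `θ`.
-/

namespace IsBiHomRep

variable {K : Type*} [Field K] {A V : Type*} [AddCommGroup A] [Module K A]
  [AddCommGroup V] [Module K V] {mul : A → A → A} {α β : A → A} {l r : A → Module.End K V}
  {φ ψ : Module.End K V}

theorem rep1_polarized (halg : IsBiHomAlg K mul α β) (hrep : IsBiHomRep K mul α β l r φ ψ)
    (x y : A) (w : V) :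
    l (mul (β x) (α y)) (ψ w) + l (mul (β y) (α x)) (ψ w)
      = l (α (β x)) (l (α y) w) + l (α (β y)) (l (α x) w) := by
  have hxy := hrep.rep1 (x + y) w
  simp only [halg.beta_lin.map_add, halg.alpha_lin.map_add, (halg.mul_lin_left _).map_add,
    (halg.mul_lin_right _).map_add, hrep.l_lin.map_add, LinearMap.add_apply, map_add] at hxy
  linear_combination (norm := abel) hxy - hrep.rep1 x w - hrep.rep1 y w

theorem rep2_polarized (halg : IsBiHomAlg K mul α β) (hrep : IsBiHomRep K mul α β l r φ ψ)
    (x y : A) (u : V) :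
    r (mul (β x) (α y)) (φ u) + r (mul (β y) (α x)) (φ u)
      = r (α (β x)) (r (β y) u) + r (α (β y)) (r (β x) u) := by
  have hxy := hrep.rep2 (x + y) u
  simp only [halg.beta_lin.map_add, halg.alpha_lin.map_add, (halg.mul_lin_left _).map_add,
    (halg.mul_lin_right _).map_add, hrep.r_lin.map_add, LinearMap.add_apply, map_add] at hxy
  linear_combination (norm := abel) hxy - hrep.rep2 x u - hrep.rep2 y u

end IsBiHomRep

namespace BiHom

section Extension

variable {K : Type*} [CommSemiring K] {A V : Type*} [AddCommGroup V] [Module K V]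

/-- `(x+u)∘(y+v) = xy + ℓ(x)v + r(y)u + θ(x,y)`, with `A ⊕ V` modelled as `A × V`. -/
def extMul (mul : A → A → A) (l r : A → Module.End K V) (θ : A → A → V) (p q : A × V) :
    A × V :=
  (mul p.1 q.1, l p.1 q.2 + r q.1 p.2 + θ p.1 q.1)

def extMap (α : A → A) (φ : V → V) (p : A × V) : A × V :=
  (α p.1, φ p.2)

/-- The component of the BiHom-associator of `extMul` that involves `θ`. -/
def thetaAssoc (mul : A → A → A) (α β : A → A) (l r : A → Module.End K V) (θ : A → A → V)
    (x y z : A) : V :=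
  θ (mul x y) (β z) + r (β z) (θ x y) - θ (α x) (mul y z) - l (α x) (θ y z)

theorem extMap_extMul_iff {mul : A → A → A} {α : A → A} {l r : A → Module.End K V}
    {φ : Module.End K V} (θ : A → A → V) (hmul : ∀ x y, α (mul x y) = mul (α x) (α y))
    (hl : ∀ x v, φ (l x v) = l (α x) (φ v)) (hr : ∀ x v, φ (r x v) = r (α x) (φ v)) :
    (∀ p q, extMap α φ (extMul mul l r θ p q)
        = extMul mul l r θ (extMap α φ p) (extMap α φ q)) ↔
      ∀ x y, φ (θ x y) = θ (α x) (α y) := by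
  constructor
  · intro h x y
    simpa [extMul, extMap] using congrArg Prod.snd (h (x, 0) (y, 0))
  · intro h p q
    simp [extMul, extMap, hmul, hl, hr, h]

variable [AddCommGroup A]

theorem biAssoc_extMul (mul : A → A → A) (α β : A → A) (l r : A → Module.End K V)
    (φ ψ : Module.End K V) (θ : A → A → V) (x y z : A) (u v w : V) :
    biAssoc (extMul mul l r θ) (extMap α φ) (extMap β ψ) (x, u) (y, v) (z, w) =
      (biAssoc mul α β x y z,
        (l (mul x y) (ψ w) - l (α x) (l y w)) + (r (β z) (l x v) - l (α x) (r z v))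
          + (r (β z) (r y u) - r (mul y z) (φ u)) + thetaAssoc mul α β l r θ x y z) := by
  refine Prod.ext rfl ?_
  simp only [biAssoc, extMul, extMap, thetaAssoc, Prod.snd_sub, map_add]
  abel

variable [Module K A] {mul : A → A → A} {l r : A → Module.End K V} {θ : A → A → V}

theorem isLinearMap_extMul_left (hmul : ∀ y, IsLinearMap K fun x => mul x y)
    (hl : IsLinearMap K l) (hθ : ∀ y, IsLinearMap K fun x => θ x y) (q : A × V) :
    IsLinearMap K fun p => extMul mul l r θ p q := by
  refine ⟨fun p p' => Prod.ext ((hmul q.1).map_add p.1 p'.1) ?_,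
    fun c p => Prod.ext ((hmul q.1).map_smul c p.1) ?_⟩
  · simp only [extMul, Prod.fst_add, Prod.snd_add, hl.map_add, LinearMap.add_apply, map_add,
      (hθ q.1).map_add]
    abel
  · simp only [extMul, Prod.smul_fst, Prod.smul_snd, hl.map_smul, LinearMap.smul_apply,
      map_smul, (hθ q.1).map_smul, smul_add]

theorem isLinearMap_extMul_right (hmul : ∀ x, IsLinearMap K (mul x))
    (hr : IsLinearMap K r) (hθ : ∀ x, IsLinearMap K (θ x)) (p : A × V) :
    IsLinearMap K (extMul mul l r θ p) := by
  refine ⟨fun q q' => Prod.ext ((hmul p.1).map_add q.1 q'.1) ?_,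
    fun c q => Prod.ext ((hmul p.1).map_smul c q.1) ?_⟩
  · simp only [extMul, Prod.fst_add, Prod.snd_add, hr.map_add, LinearMap.add_apply, map_add,
      (hθ p.1).map_add]
    abel
  · simp only [extMul, Prod.smul_fst, Prod.smul_snd, hr.map_smul, LinearMap.smul_apply,
      map_smul, (hθ p.1).map_smul, smul_add]

theorem isLinearMap_extMap {α : A → A} (hα : IsLinearMap K α) (φ : Module.End K V) :
    IsLinearMap K (extMap α φ) :=
  ⟨fun p p' => Prod.ext (hα.map_add p.1 p'.1) (map_add φ p.2 p'.2),
    fun c p => Prod.ext (hα.map_smul c p.1) (map_smul φ c p.2)⟩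

end Extension

section Alternativity

variable {K : Type*} [Field K] {A V : Type*} [AddCommGroup A] [Module K A]
  [AddCommGroup V] [Module K V] {mul : A → A → A} {α β : A → A} {l r : A → Module.End K V}
  {φ ψ : Module.End K V}

/-- The `w`-, `v`- and `u`-terms cancel by `rep1_polarized x y w`, `rep3 x z v` and
`rep3 y z u`. -/
theorem extMul_left_alt_iff (halg : IsBiHomAlt K mul α β) (hrep : IsBiHomRep K mul α β l r φ ψ)
    (θ : A → A → V) :
    (∀ p q t, biAssoc (extMul mul l r θ) (extMap α φ) (extMap β ψ)
          (extMap β ψ p) (extMap α φ q) t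
        + biAssoc (extMul mul l r θ) (extMap α φ) (extMap β ψ)
          (extMap β ψ q) (extMap α φ p) t = 0) ↔
      ∀ x y z, thetaAssoc mul α β l r θ (β x) (α y) z
        + thetaAssoc mul α β l r θ (β y) (α x) z = 0 := by
  constructor
  · intro h x y z
    simpa [extMap, biAssoc_extMul] using congrArg Prod.snd (h (x, 0) (y, 0) (z, 0))
  · rintro h ⟨x, u⟩ ⟨y, v⟩ ⟨z, w⟩
    simp only [extMap, biAssoc_extMul, Prod.mk_add_mk, Prod.mk_eq_zero]
    refine ⟨halg.left_alt x y z, ?_⟩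
    linear_combination (norm := abel) hrep.rep1_polarized halg.toIsBiHomAlg x y w
      + hrep.rep3 x z v + hrep.rep3 y z u + h x y z

/-- The `w`-, `v`- and `u`-terms cancel by `rep4 y x w`, `rep4 z x v` and
`rep2_polarized y z u`. -/
theorem extMul_right_alt_iff (halg : IsBiHomAlt K mul α β) (hrep : IsBiHomRep K mul α β l r φ ψ)
    (θ : A → A → V) :
    (∀ p q t, biAssoc (extMul mul l r θ) (extMap α φ) (extMap β ψ)
          p (extMap β ψ q) (extMap α φ t)
        + biAssoc (extMul mul l r θ) (extMap α φ) (extMap β ψ)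
          p (extMap β ψ t) (extMap α φ q) = 0) ↔
      ∀ x y z, thetaAssoc mul α β l r θ x (β y) (α z)
        + thetaAssoc mul α β l r θ x (β z) (α y) = 0 := by
  constructor
  · intro h x y z
    simpa [extMap, biAssoc_extMul] using congrArg Prod.snd (h (x, 0) (y, 0) (z, 0))
  · rintro h ⟨x, u⟩ ⟨y, v⟩ ⟨z, w⟩
    simp only [extMap, biAssoc_extMul, Prod.mk_add_mk, Prod.mk_eq_zero, ← halg.alpha_beta_comm,
      ← hrep.phi_psi_comm]
    refine ⟨halg.right_alt x y z, ?_⟩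
    linear_combination (norm := abel) h x y z - hrep.rep2_polarized halg.toIsBiHomAlg y z u
      - hrep.rep4 z x v - hrep.rep4 y x w

end Alternativity

end BiHom

theorem T_theta_extension_isBiHomAlt_iff_general
    (K : Type*) [Field K] {A V : Type*} [AddCommGroup A] [Module K A]
    [AddCommGroup V] [Module K V]
    (mul : A → A → A) (α β : A → A) (halg : IsBiHomAlt K mul α β)
    (l r : A → Module.End K V) (φ ψ : Module.End K V)
    (hrep : IsBiHomRep K mul α β l r φ ψ)
    (θ : A → A → V) (hθl : ∀ y, IsLinearMap K fun x => θ x y)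
    (hθr : ∀ x, IsLinearMap K (θ x)) :
    IsBiHomAlt K
      (fun p q : A × V => (mul p.1 q.1, l p.1 q.2 + r q.1 p.2 + θ p.1 q.1))
      (fun p => (α p.1, φ p.2)) (fun p => (β p.1, ψ p.2)) ↔
    ((∀ x y, φ (θ x y) = θ (α x) (α y)) ∧
     (∀ x y, ψ (θ x y) = θ (β x) (β y)) ∧
     (∀ x y z,
       θ (mul (β x) (α y)) (β z) + r (β z) (θ (β x) (α y))
         - θ (α (β x)) (mul (α y) z) - l (α (β x)) (θ (α y) z)
         + θ (mul (β y) (α x)) (β z) + r (β z) (θ (β y) (α x))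
         - θ (α (β y)) (mul (α x) z) - l (α (β y)) (θ (α x) z) = 0) ∧
     (∀ x y z,
       θ (mul x (β y)) (α (β z)) + r (α (β z)) (θ x (β y))
         - θ (α x) (mul (β y) (α z)) - l (α x) (θ (β y) (α z))
         + θ (mul x (β z)) (α (β y)) + r (α (β y)) (θ x (β z))
         - θ (α x) (mul (β z) (α y)) - l (α x) (θ (β z) (α y)) = 0)) := by
  have hleft := BiHom.extMul_left_alt_iff halg hrep θ
  have hright := BiHom.extMul_right_alt_iff halg hrep θ
  simp only [BiHom.thetaAssoc, add_sub, ← add_assoc, ← halg.alpha_beta_comm] at hleft hright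
  rw [← BiHom.extMap_extMul_iff θ halg.alpha_mul hrep.phi_l hrep.phi_r,
    ← BiHom.extMap_extMul_iff θ halg.beta_mul hrep.psi_l hrep.psi_r, ← hleft, ← hright]
  refine ⟨fun H => ⟨H.alpha_mul, H.beta_mul, H.left_alt, H.right_alt⟩,
    fun ⟨hα, hβ, hl, hr⟩ => ⟨⟨?_, ?_, ?_, ?_, ?_, hα, hβ⟩, hl, hr⟩⟩
  · exact BiHom.isLinearMap_extMul_left halg.mul_lin_left hrep.l_lin hθl
  · exact BiHom.isLinearMap_extMul_right halg.mul_lin_right hrep.r_lin hθr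
  · exact BiHom.isLinearMap_extMap halg.alpha_lin φ
  · exact BiHom.isLinearMap_extMap halg.beta_lin ψ
  · exact fun p => Prod.ext (halg.alpha_beta_comm p.1) (hrep.phi_psi_comm p.2)

/-- The `T_θ`-extension: given a BiHom-alternative algebra `(A, μ, α, β)`, a
representation `(V, ℓ, r, φ, ψ)` and a bilinear map `θ : A × A → V`, the space
`A ⊕ V` with product `(x+u)∘(y+v) = xy + ℓ(x)v + r(y)u + θ(x,y)` and structure
maps `α+φ`, `β+ψ` is a BiHom-alternative algebra iff `θ` satisfies the stated
cocycle conditions. -/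
theorem T_theta_extension_isBiHomAlt_iff
    (K : Type*) [Field K] [CharZero K] {A V : Type*} [AddCommGroup A] [Module K A]
    [AddCommGroup V] [Module K V]
    (mul : A → A → A) (α β : A → A) (halg : IsBiHomAlt K mul α β)
    (l r : A → Module.End K V) (φ ψ : Module.End K V)
    (hrep : IsBiHomRep K mul α β l r φ ψ)
    (θ : A → A → V) (hθl : ∀ y, IsLinearMap K fun x => θ x y)
    (hθr : ∀ x, IsLinearMap K (θ x)) :
    IsBiHomAlt K
      (fun p q : A × V => (mul p.1 q.1, l p.1 q.2 + r q.1 p.2 + θ p.1 q.1))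
      (fun p => (α p.1, φ p.2)) (fun p => (β p.1, ψ p.2)) ↔
    ((∀ x y, φ (θ x y) = θ (α x) (α y)) ∧
     (∀ x y, ψ (θ x y) = θ (β x) (β y)) ∧
     (∀ x y z,
       θ (mul (β x) (α y)) (β z) + r (β z) (θ (β x) (α y))
         - θ (α (β x)) (mul (α y) z) - l (α (β x)) (θ (α y) z)
         + θ (mul (β y) (α x)) (β z) + r (β z) (θ (β y) (α x))
         - θ (α (β y)) (mul (α x) z) - l (α (β y)) (θ (α x) z) = 0) ∧
     (∀ x y z,
       θ (mul x (β y)) (α (β z)) + r (α (β z)) (θ x (β y))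
         - θ (α x) (mul (β y) (α z)) - l (α x) (θ (β y) (α z))
         + θ (mul x (β z)) (α (β y)) + r (α (β y)) (θ x (β z))
         - θ (α x) (mul (β z) (α y)) - l (α x) (θ (β z) (α y)) = 0)) :=
  T_theta_extension_isBiHomAlt_iff_general K mul α β halg l r φ ψ hrep θ hθl hθr
end

section
/- Let (A, μ, α, β) be a BiHom-alternative algebra, k, l, s, t ∈ ℕ, D an α^kβ^l-derivation of A and θ an α^sβ^t-centroid of A. Then the commutator [D,θ] = D∘θ − θ∘D is an α^{k+s}β^{l+t}-centroid of A. -/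
/-- An `α^k β^l`-derivation of `(A, μ, α, β)`. -/
structure IsDerivation (K : Type*) {A : Type*} [Field K] [AddCommGroup A] [Module K A]
    (mul : A → A → A) (α β : A → A) (k l : ℕ) (D : A → A) : Prop where
  lin : IsLinearMap K D
  comm_a : ∀ x, D (α x) = α (D x)
  comm_b : ∀ x, D (β x) = β (D x)
  der : ∀ x y, D (mul x y)
      = mul (D x) (α^[k] (β^[l] y)) + mul (α^[k] (β^[l] x)) (D y)

/-- An `α^k β^l`-centroid of `(A, μ, α, β)`. -/
structure IsCentroid (K : Type*) {A : Type*} [Field K] [AddCommGroup A] [Module K A]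
    (mul : A → A → A) (α β : A → A) (k l : ℕ) (θ : A → A) : Prop where
  lin : IsLinearMap K θ
  comm_a : ∀ x, θ (α x) = α (θ x)
  comm_b : ∀ x, θ (β x) = β (θ x)
  cent_l : ∀ x y, θ (mul x y) = mul (θ x) (α^[k] (β^[l] y))
  cent_r : ∀ x y, θ (mul x y) = mul (α^[k] (β^[l] x)) (θ y)

/-- An `α^k β^l`-quasi-centroid of `(A, μ, α, β)`. -/
structure IsQuasiCentroid (K : Type*) {A : Type*} [Field K] [AddCommGroup A] [Module K A]
    (mul : A → A → A) (α β : A → A) (k l : ℕ) (θ : A → A) : Prop where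
  lin : IsLinearMap K θ
  comm_a : ∀ x, θ (α x) = α (θ x)
  comm_b : ∀ x, θ (β x) = β (θ x)
  qc : ∀ x y, mul (θ x) (α^[k] (β^[l] y)) = mul (α^[k] (β^[l] x)) (θ y)

/-- An `α^k β^l`-quasi-derivation of `(A, μ, α, β)`. -/
def IsQuasiDerivation (K : Type*) {A : Type*} [Field K] [AddCommGroup A] [Module K A]
    (mul : A → A → A) (α β : A → A) (k l : ℕ) (D : A → A) : Prop :=
  IsLinearMap K D ∧ (∀ x, D (α x) = α (D x)) ∧ (∀ x, D (β x) = β (D x)) ∧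
    ∃ D' : A → A, IsLinearMap K D' ∧ (∀ x, D' (α x) = α (D' x)) ∧
      (∀ x, D' (β x) = β (D' x)) ∧
      ∀ x y, D' (mul x y)
        = mul (D x) (α^[k] (β^[l] y)) + mul (α^[k] (β^[l] x)) (D y)

/-- An `α^k β^l`-generalized derivation of `(A, μ, α, β)` with associated maps
`D'` and `D''`. -/
structure IsGenDerivation (K : Type*) {A : Type*} [Field K] [AddCommGroup A] [Module K A]
    (mul : A → A → A) (α β : A → A) (k l : ℕ) (D D' D'' : A → A) : Prop where
  lin : IsLinearMap K D
  lin' : IsLinearMap K D'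
  lin'' : IsLinearMap K D''
  comm_a : ∀ x, D (α x) = α (D x)
  comm_b : ∀ x, D (β x) = β (D x)
  comm_a' : ∀ x, D' (α x) = α (D' x)
  comm_b' : ∀ x, D' (β x) = β (D' x)
  comm_a'' : ∀ x, D'' (α x) = α (D'' x)
  comm_b'' : ∀ x, D'' (β x) = β (D'' x)
  gen : ∀ x y, D'' (mul x y)
      = mul (D x) (α^[k] (β^[l] y)) + mul (α^[k] (β^[l] x)) (D' y)

/-! Expanding `D (θ (x y))` by the centroid rule and then the derivation rule, and `θ (D (x y))`
by the derivation rule and then the centroid rule, both produce the mixed term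
`α^k β^l (θ x) · α^s β^t (D y)`, since `D` and `θ` commute with `α` and `β`. It cancels in the
difference, leaving `[D, θ] x · α^{k+s} β^{l+t} y`; the right-hand rule is symmetric. -/

section Iterate

variable {A : Type*} {α β : A → A}

theorem Function.Commute.iterate_comp_iterate {f : A → A} (hα : Function.Commute f α)
    (hβ : Function.Commute f β) (m n : ℕ) (x : A) :
    f (α^[m] (β^[n] x)) = α^[m] (β^[n] (f x)) :=
  (hα.iterate_right m).comp_right (hβ.iterate_right n) x

theorem Function.Commute.iterate_add_iterate_add_apply (h : Function.Commute α β)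
    (k l s t : ℕ) (x : A) :
    α^[k + s] (β^[l + t] x) = α^[k] (β^[l] (α^[s] (β^[t] x))) := by
  rw [Function.iterate_add_apply, Function.iterate_add_apply,
    ((h.iterate_iterate s l).symm) (β^[t] x)]

end Iterate

section Commutator

variable {K : Type*} [Field K] {A : Type*} [AddCommGroup A] [Module K A]
  {mul : A → A → A} {α β : A → A} {k l s t : ℕ} {D θ : A → A}

theorem IsLinearMap.commutator (hD : IsLinearMap K D) (hθ : IsLinearMap K θ) :
    IsLinearMap K fun x => D (θ x) - θ (D x) :=
  ((hD.mk' D).comp (hθ.mk' θ) - (hθ.mk' θ).comp (hD.mk' D)).isLinear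

theorem Function.Commute.commutator {γ : A → A} (hγ : IsLinearMap K γ)
    (hD : Function.Commute D γ) (hθ : Function.Commute θ γ) :
    Function.Commute (fun x => D (θ x) - θ (D x)) γ := fun x => by
  dsimp only
  rw [hθ x, hD (θ x), hD x, hθ (D x), hγ.map_sub]

theorem IsDerivation.commutator_mul_left (halg : IsBiHomAlg K mul α β)
    (hD : IsDerivation K mul α β k l D) (hθ : IsCentroid K mul α β s t θ) (x y : A) :
    D (θ (mul x y)) - θ (D (mul x y))
      = mul (D (θ x) - θ (D x)) (α^[k + s] (β^[l + t] y)) := by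
  have hαβ : Function.Commute α β := halg.alpha_beta_comm
  have hDθ : D (θ (mul x y)) = mul (D (θ x)) (α^[k + s] (β^[l + t] y))
      + mul (α^[k] (β^[l] (θ x))) (α^[s] (β^[t] (D y))) := by
    rw [hθ.cent_l, hD.der, Function.Commute.iterate_comp_iterate hD.comm_a hD.comm_b,
      hαβ.iterate_add_iterate_add_apply]
  have hθD : θ (D (mul x y)) = mul (θ (D x)) (α^[k + s] (β^[l + t] y))
      + mul (α^[k] (β^[l] (θ x))) (α^[s] (β^[t] (D y))) := by
    rw [hD.der, hθ.lin.map_add, hθ.cent_l, hθ.cent_l,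
      Function.Commute.iterate_comp_iterate hθ.comm_a hθ.comm_b, add_comm k s, add_comm l t,
      hαβ.iterate_add_iterate_add_apply]
  rw [hDθ, hθD, (halg.mul_lin_left _).map_sub]
  abel

theorem IsDerivation.commutator_mul_right (halg : IsBiHomAlg K mul α β)
    (hD : IsDerivation K mul α β k l D) (hθ : IsCentroid K mul α β s t θ) (x y : A) :
    D (θ (mul x y)) - θ (D (mul x y))
      = mul (α^[k + s] (β^[l + t] x)) (D (θ y) - θ (D y)) := by
  have hαβ : Function.Commute α β := halg.alpha_beta_comm
  have hDθ : D (θ (mul x y)) = mul (α^[s] (β^[t] (D x))) (α^[k] (β^[l] (θ y)))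
      + mul (α^[k + s] (β^[l + t] x)) (D (θ y)) := by
    rw [hθ.cent_r, hD.der, Function.Commute.iterate_comp_iterate hD.comm_a hD.comm_b,
      hαβ.iterate_add_iterate_add_apply]
  have hθD : θ (D (mul x y)) = mul (α^[s] (β^[t] (D x))) (α^[k] (β^[l] (θ y)))
      + mul (α^[k + s] (β^[l + t] x)) (θ (D y)) := by
    rw [hD.der, hθ.lin.map_add, hθ.cent_r, hθ.cent_r,
      Function.Commute.iterate_comp_iterate hθ.comm_a hθ.comm_b, add_comm k s, add_comm l t,
      hαβ.iterate_add_iterate_add_apply]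
  rw [hDθ, hθD, (halg.mul_lin_right _).map_sub]
  abel

end Commutator

theorem commutator_derivation_centroid_isCentroid_general
    (K : Type*) [Field K] {A : Type*} [AddCommGroup A] [Module K A]
    (mul : A → A → A) (α β : A → A) (halg : IsBiHomAlt K mul α β)
    (k l s t : ℕ) (D θ : A → A)
    (hD : IsDerivation K mul α β k l D) (hθ : IsCentroid K mul α β s t θ) :
    IsCentroid K mul α β (k + s) (l + t) (fun x => D (θ x) - θ (D x)) := by
  exact ⟨hD.lin.commutator hθ.lin,
    Function.Commute.commutator halg.alpha_lin hD.comm_a hθ.comm_a,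
    Function.Commute.commutator halg.beta_lin hD.comm_b hθ.comm_b,
    hD.commutator_mul_left halg.toIsBiHomAlg hθ,
    hD.commutator_mul_right halg.toIsBiHomAlg hθ⟩

/-- If `D` is an `α^k β^l`-derivation and `θ` an `α^s β^t`-centroid of a
BiHom-alternative algebra, then `[D,θ] = D∘θ − θ∘D` is an
`α^{k+s} β^{l+t}`-centroid. -/
theorem commutator_derivation_centroid_isCentroid
    (K : Type*) [Field K] [CharZero K] {A : Type*} [AddCommGroup A] [Module K A]
    (mul : A → A → A) (α β : A → A) (halg : IsBiHomAlt K mul α β)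
    (k l s t : ℕ) (D θ : A → A)
    (hD : IsDerivation K mul α β k l D) (hθ : IsCentroid K mul α β s t θ) :
    IsCentroid K mul α β (k + s) (l + t) (fun x => D (θ x) - θ (D x)) :=
  commutator_derivation_centroid_isCentroid_general K mul α β halg k l s t D θ hD hθ
end

section
/- Let (A, μ, α, β) be a BiHom-alternative algebra and k, l, s, t ∈ ℕ. If D₁ is an α^kβ^l-generalized derivation of A with associated maps D₁', D₁'' and D₂ is an α^sβ^t-generalized derivation of A with associated maps D₂', D₂'', then the commutator [D₁,D₂] = D₁∘D₂ − D₂∘D₁ is an α^{k+s}β^{l+t}-generalized derivation of A with associated maps [D₁',D₂'] and [D₁'',D₂'']; i.e., [D₁'',D₂''](xy) = [D₁,D₂](x)·α^{k+s}β^{l+t}(y) + α^{k+s}β^{l+t}(x)·[D₁',D₂'](y) for all x, y ∈ A, and [D₁,D₂], [D₁',D₂'], [D₁'',D₂''] all commute with α and β. -/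
section

variable {A : Type*}

theorem IsLinearMap.commutator_s18 {R : Type*} [Semiring R] [AddCommGroup A] [Module R A]
    {f g : A → A} (hf : IsLinearMap R f) (hg : IsLinearMap R g) :
    IsLinearMap R fun x => f (g x) - g (f x) :=
  (hf.mk' f * hg.mk' g - hg.mk' g * hf.mk' f).isLinear

theorem Function.Commute.commutator_left {R : Type*} [Ring R] [AddCommGroup A] [Module R A]
    {f g γ : A → A} (hf : Function.Commute f γ) (hg : Function.Commute g γ)
    (hγ : IsLinearMap R γ) : Function.Commute (fun x => f (g x) - g (f x)) γ := fun x => by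
  simp only [hf.eq, hg.eq, hγ.map_sub]

variable {α β : A → A}

theorem Function.Commute.iterate_iterate_apply_iterate_iterate (hαβ : Function.Commute α β)
    (k l s t : ℕ) (x : A) : α^[k] (β^[l] (α^[s] (β^[t] x))) = α^[k + s] (β^[l + t] x) := by
  rw [← (hαβ.iterate_iterate s l).eq, Function.iterate_add_apply, Function.iterate_add_apply]

theorem Function.Commute.apply_iterate_iterate {D : A → A} (hα : Function.Commute D α)
    (hβ : Function.Commute D β) (k l : ℕ) (x : A) :
    D (α^[k] (β^[l] x)) = α^[k] (β^[l] (D x)) := by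
  rw [(hα.iterate_right k).eq, (hβ.iterate_right l).eq]

theorem IsGenDerivation.comp_apply_mul {K : Type*} [Field K] [AddCommGroup A] [Module K A]
    {mul : A → A → A} (hαβ : Function.Commute α β) {k l s t : ℕ}
    {D₁ D₁' D₁'' D₂ D₂' D₂'' : A → A} (h₁ : IsGenDerivation K mul α β k l D₁ D₁' D₁'')
    (h₂ : IsGenDerivation K mul α β s t D₂ D₂' D₂'') (x y : A) :
    D₁'' (D₂'' (mul x y))
      = mul (D₁ (D₂ x)) (α^[k + s] (β^[l + t] y))
        + mul (D₂ (α^[k] (β^[l] x))) (D₁' (α^[s] (β^[t] y)))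
        + (mul (D₁ (α^[s] (β^[t] x))) (D₂' (α^[k] (β^[l] y)))
          + mul (α^[k + s] (β^[l + t] x)) (D₁' (D₂' y))) := by
  rw [h₂.gen, h₁.lin''.map_add, h₁.gen, h₁.gen, hαβ.iterate_iterate_apply_iterate_iterate,
    hαβ.iterate_iterate_apply_iterate_iterate,
    Function.Commute.apply_iterate_iterate h₂.comm_a h₂.comm_b,
    Function.Commute.apply_iterate_iterate h₂.comm_a' h₂.comm_b',
    Function.Commute.apply_iterate_iterate h₁.comm_a' h₁.comm_b']

end

theorem commutator_genDerivations_isGenDerivation_general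
    (K : Type*) [Field K] {A : Type*} [AddCommGroup A] [Module K A]
    (mul : A → A → A) (α β : A → A) (halg : IsBiHomAlt K mul α β)
    (k l s t : ℕ) (D₁ D₁' D₁'' D₂ D₂' D₂'' : A → A)
    (h1 : IsGenDerivation K mul α β k l D₁ D₁' D₁'')
    (h2 : IsGenDerivation K mul α β s t D₂ D₂' D₂'') :
    IsGenDerivation K mul α β (k + s) (l + t)
      (fun x => D₁ (D₂ x) - D₂ (D₁ x))
      (fun x => D₁' (D₂' x) - D₂' (D₁' x))
      (fun x => D₁'' (D₂'' x) - D₂'' (D₁'' x)) := by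
  refine ⟨h1.lin.commutator_s18 h2.lin, h1.lin'.commutator_s18 h2.lin', h1.lin''.commutator_s18 h2.lin'',
    Function.Commute.commutator_left h1.comm_a h2.comm_a halg.alpha_lin,
    Function.Commute.commutator_left h1.comm_b h2.comm_b halg.beta_lin,
    Function.Commute.commutator_left h1.comm_a' h2.comm_a' halg.alpha_lin,
    Function.Commute.commutator_left h1.comm_b' h2.comm_b' halg.beta_lin,
    Function.Commute.commutator_left h1.comm_a'' h2.comm_a'' halg.alpha_lin,
    Function.Commute.commutator_left h1.comm_b'' h2.comm_b'' halg.beta_lin, fun x y => ?_⟩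
  have hαβ : Function.Commute α β := halg.alpha_beta_comm
  rw [h1.comp_apply_mul hαβ h2, h2.comp_apply_mul hαβ h1, Nat.add_comm s k, Nat.add_comm t l,
    (halg.mul_lin_left _).map_sub, (halg.mul_lin_right _).map_sub]
  abel

/-- If `D₁` is an `α^k β^l`-generalized derivation with associated maps
`D₁', D₁''` and `D₂` an `α^s β^t`-generalized derivation with associated maps
`D₂', D₂''`, then `[D₁,D₂]` is an `α^{k+s} β^{l+t}`-generalized derivation with
associated maps `[D₁',D₂']` and `[D₁'',D₂'']`. -/
theorem commutator_genDerivations_isGenDerivation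
    (K : Type*) [Field K] [CharZero K] {A : Type*} [AddCommGroup A] [Module K A]
    (mul : A → A → A) (α β : A → A) (halg : IsBiHomAlt K mul α β)
    (k l s t : ℕ) (D₁ D₁' D₁'' D₂ D₂' D₂'' : A → A)
    (h1 : IsGenDerivation K mul α β k l D₁ D₁' D₁'')
    (h2 : IsGenDerivation K mul α β s t D₂ D₂' D₂'') :
    IsGenDerivation K mul α β (k + s) (l + t)
      (fun x => D₁ (D₂ x) - D₂ (D₁ x))
      (fun x => D₁' (D₂' x) - D₂' (D₁' x))
      (fun x => D₁'' (D₂'' x) - D₂'' (D₁'' x)) :=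
  commutator_genDerivations_isGenDerivation_general K mul α β halg k l s t D₁ D₁' D₁'' D₂ D₂' D₂''
    h1 h2
end

section
/- Let (A, μ, α, β) be a BiHom-alternative algebra and k, l ∈ ℕ. Then the symmetric α^kβ^l-generalized derivations of A are exactly the sums of α^kβ^l-quasi-derivations and α^kβ^l-quasi-centroids: (i) if D is a symmetric α^kβ^l-generalized derivation with associated maps D', D'', then (D+D')/2 is an α^kβ^l-quasi-derivation, (D−D')/2 is an α^kβ^l-quasi-centroid, and D = (D+D')/2 + (D−D')/2; (ii) conversely, if D₁ is an α^kβ^l-quasi-derivation and D₂ is an α^kβ^l-quasi-centroid, then D₁ + D₂ is a symmetric α^kβ^l-generalized derivation. -/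
/-- A symmetric `α^k β^l`-generalized derivation of `(A, μ, α, β)`. -/
def IsSymGenDerivation (K : Type*) {A : Type*} [Field K] [AddCommGroup A] [Module K A]
    (mul : A → A → A) (α β : A → A) (k l : ℕ) (D : A → A) : Prop :=
  IsLinearMap K D ∧ (∀ x, D (α x) = α (D x)) ∧ (∀ x, D (β x) = β (D x)) ∧
    ∃ D' D'' : A → A,
      IsLinearMap K D' ∧ (∀ x, D' (α x) = α (D' x)) ∧ (∀ x, D' (β x) = β (D' x)) ∧
      IsLinearMap K D'' ∧ (∀ x, D'' (α x) = α (D'' x)) ∧ (∀ x, D'' (β x) = β (D'' x)) ∧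
      (∀ x y, D'' (mul x y)
          = mul (D x) (α^[k] (β^[l] y)) + mul (α^[k] (β^[l] x)) (D' y)) ∧
      (∀ x y, D'' (mul x y)
          = mul (D' x) (α^[k] (β^[l] y)) + mul (α^[k] (β^[l] x)) (D y))

/-! Split `D = ½(D + D') + ½(D - D')`. Adding the two Leibniz identities of a symmetric
generalized derivation gives the quasi-derivation identity for `½(D + D')`, with the same `D''`;
subtracting them gives the quasi-centroid identity for `½(D - D')`. Conversely, for a
quasi-derivation `D₁` with associated map `E` and a quasi-centroid `θ`, the quasi-centroid
identity lets `θ` move across the product, so `D₁ + θ` is a symmetric generalized derivation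
with associated maps `D₁ - θ` and `E`. -/

def IsTwistCompatible (K : Type*) {A : Type*} [CommRing K] [AddCommGroup A] [Module K A]
    (α β D : A → A) : Prop :=
  IsLinearMap K D ∧ Function.Commute D α ∧ Function.Commute D β

namespace IsTwistCompatible

variable {K A : Type*} [CommRing K] [AddCommGroup A] [Module K A] {α β D D' : A → A}

theorem add (hα : IsLinearMap K α) (hβ : IsLinearMap K β) (hD : IsTwistCompatible K α β D)
    (hD' : IsTwistCompatible K α β D') : IsTwistCompatible K α β fun x => D x + D' x :=
  ⟨(hD.1.mk' D + hD'.1.mk' D').isLinear,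
    fun x => by simp only [hD.2.1 x, hD'.2.1 x, hα.map_add],
    fun x => by simp only [hD.2.2 x, hD'.2.2 x, hβ.map_add]⟩

theorem sub (hα : IsLinearMap K α) (hβ : IsLinearMap K β) (hD : IsTwistCompatible K α β D)
    (hD' : IsTwistCompatible K α β D') : IsTwistCompatible K α β fun x => D x - D' x :=
  ⟨(hD.1.mk' D - hD'.1.mk' D').isLinear,
    fun x => by simp only [hD.2.1 x, hD'.2.1 x, hα.map_sub],
    fun x => by simp only [hD.2.2 x, hD'.2.2 x, hβ.map_sub]⟩

theorem smul (hα : IsLinearMap K α) (hβ : IsLinearMap K β) (hD : IsTwistCompatible K α β D)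
    (c : K) : IsTwistCompatible K α β fun x => c • D x :=
  ⟨(c • hD.1.mk' D).isLinear,
    fun x => by simp only [hD.2.1 x, hα.map_smul],
    fun x => by simp only [hD.2.2 x, hβ.map_smul]⟩

end IsTwistCompatible

def TwistedLeibniz {A : Type*} [Add A] (mul : A → A → A) (γ D D' E : A → A) : Prop :=
  ∀ x y, E (mul x y) = mul (D x) (γ y) + mul (γ x) (D' y)

def TwistedCentral {A : Type*} (mul : A → A → A) (γ θ : A → A) : Prop :=
  ∀ x y, mul (θ x) (γ y) = mul (γ x) (θ y)

namespace TwistedLeibniz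

section Ring

variable {K A : Type*} [Ring K] [AddCommGroup A] [Module K A] {mul : A → A → A}
  {γ D E θ : A → A}

theorem add_sub (hl : ∀ y, IsLinearMap K fun x => mul x y) (hr : ∀ x, IsLinearMap K (mul x))
    (h : TwistedLeibniz mul γ D D E) (hθ : TwistedCentral mul γ θ) :
    TwistedLeibniz mul γ (fun x => D x + θ x) (fun x => D x - θ x) E := by
  intro x y
  rw [h x y, (hl _).map_add, (hr _).map_sub, hθ x y]
  abel

theorem sub_add (hl : ∀ y, IsLinearMap K fun x => mul x y) (hr : ∀ x, IsLinearMap K (mul x))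
    (h : TwistedLeibniz mul γ D D E) (hθ : TwistedCentral mul γ θ) :
    TwistedLeibniz mul γ (fun x => D x - θ x) (fun x => D x + θ x) E := by
  intro x y
  rw [h x y, (hl _).map_sub, (hr _).map_add, hθ x y]
  abel

end Ring

section DivisionRing

variable {K A : Type*} [DivisionRing K] [AddCommGroup A] [Module K A] {mul : A → A → A}
  {γ D D' E : A → A}

theorem half_add (hl : ∀ y, IsLinearMap K fun x => mul x y) (hr : ∀ x, IsLinearMap K (mul x))
    (h2 : (2 : K) ≠ 0) (h : TwistedLeibniz mul γ D D' E) (h' : TwistedLeibniz mul γ D' D E) :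
    TwistedLeibniz mul γ (fun x => (2 : K)⁻¹ • (D x + D' x)) (fun x => (2 : K)⁻¹ • (D x + D' x))
      E := by
  intro x y
  calc E (mul x y) = (2 : K)⁻¹ • (E (mul x y) + E (mul x y)) := by
        rw [← two_smul K, smul_smul, inv_mul_cancel₀ h2, one_smul]
    _ = (2 : K)⁻¹ • ((mul (D x) (γ y) + mul (γ x) (D' y))
          + (mul (D' x) (γ y) + mul (γ x) (D y))) := by rw [← h x y, ← h' x y]
    _ = mul ((2 : K)⁻¹ • (D x + D' x)) (γ y) + mul (γ x) ((2 : K)⁻¹ • (D y + D' y)) := by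
        rw [(hl _).map_smul, (hr _).map_smul, (hl _).map_add, (hr _).map_add, ← smul_add]
        congr 1
        abel

theorem twistedCentral_half_sub (hl : ∀ y, IsLinearMap K fun x => mul x y)
    (hr : ∀ x, IsLinearMap K (mul x)) (h : TwistedLeibniz mul γ D D' E)
    (h' : TwistedLeibniz mul γ D' D E) :
    TwistedCentral mul γ fun x => (2 : K)⁻¹ • (D x - D' x) := by
  intro x y
  have hdiff : mul (D x) (γ y) - mul (D' x) (γ y) = mul (γ x) (D y) - mul (γ x) (D' y) := by
    rw [sub_eq_sub_iff_add_eq_add, ← h x y, add_comm (mul (γ x) (D y)), ← h' x y]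
  rw [(hl _).map_smul, (hr _).map_smul, (hl _).map_sub, (hr _).map_sub, hdiff]

end DivisionRing

end TwistedLeibniz

/-- The symmetric `α^k β^l`-generalized derivations are exactly the sums of
`α^k β^l`-quasi-derivations and `α^k β^l`-quasi-centroids:
`SGDer(A) = QDer(A) + QC(A)`. -/
theorem symGenDerivation_eq_quasiDerivation_add_quasiCentroid
    (K : Type*) [Field K] [CharZero K] {A : Type*} [AddCommGroup A] [Module K A]
    (mul : A → A → A) (α β : A → A) (halg : IsBiHomAlt K mul α β) (k l : ℕ) :
    (∀ D D' D'' : A → A,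
      IsLinearMap K D → (∀ x, D (α x) = α (D x)) → (∀ x, D (β x) = β (D x)) →
      IsLinearMap K D' → (∀ x, D' (α x) = α (D' x)) → (∀ x, D' (β x) = β (D' x)) →
      IsLinearMap K D'' → (∀ x, D'' (α x) = α (D'' x)) → (∀ x, D'' (β x) = β (D'' x)) →
      (∀ x y, D'' (mul x y)
          = mul (D x) (α^[k] (β^[l] y)) + mul (α^[k] (β^[l] x)) (D' y)) →
      (∀ x y, D'' (mul x y)
          = mul (D' x) (α^[k] (β^[l] y)) + mul (α^[k] (β^[l] x)) (D y)) →
      IsQuasiDerivation K mul α β k l (fun x => (2 : K)⁻¹ • (D x + D' x)) ∧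
      IsQuasiCentroid K mul α β k l (fun x => (2 : K)⁻¹ • (D x - D' x)) ∧
      (∀ x, D x = (2 : K)⁻¹ • (D x + D' x) + (2 : K)⁻¹ • (D x - D' x))) ∧
    (∀ D₁ D₂ : A → A, IsQuasiDerivation K mul α β k l D₁ →
      IsQuasiCentroid K mul α β k l D₂ →
      IsSymGenDerivation K mul α β k l (fun x => D₁ x + D₂ x)) := by
  have h2 : (2 : K) ≠ 0 := two_ne_zero
  have hα := halg.alpha_lin
  have hβ := halg.beta_lin
  have hl := halg.mul_lin_left
  have hr := halg.mul_lin_right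
  refine ⟨fun D D' D'' hD ha hb hD' ha' hb' hD'' ha'' hb'' hLeib hLeib' => ?_, ?_⟩
  · have hcD : IsTwistCompatible K α β D := ⟨hD, ha, hb⟩
    have hcD' : IsTwistCompatible K α β D' := ⟨hD', ha', hb'⟩
    obtain ⟨hSlin, hSa, hSb⟩ := (hcD.add hα hβ hcD').smul hα hβ (2 : K)⁻¹
    obtain ⟨hTlin, hTa, hTb⟩ := (hcD.sub hα hβ hcD').smul hα hβ (2 : K)⁻¹
    refine ⟨⟨hSlin, hSa, hSb, D'', hD'', ha'', hb'',
        TwistedLeibniz.half_add hl hr h2 hLeib hLeib'⟩,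
      ⟨hTlin, hTa, hTb, TwistedLeibniz.twistedCentral_half_sub hl hr hLeib hLeib'⟩, fun x => ?_⟩
    rw [← smul_add, add_add_sub_cancel, ← two_smul K, smul_smul, inv_mul_cancel₀ h2, one_smul]
  · rintro D₁ θ ⟨hD₁, ha₁, hb₁, E, hE, haE, hbE, hLeib⟩ ⟨hθ, haθ, hbθ, hcent⟩
    have hcD₁ : IsTwistCompatible K α β D₁ := ⟨hD₁, ha₁, hb₁⟩
    have hcθ : IsTwistCompatible K α β θ := ⟨hθ, haθ, hbθ⟩
    obtain ⟨hSlin, hSa, hSb⟩ := hcD₁.add hα hβ hcθ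
    obtain ⟨hTlin, hTa, hTb⟩ := hcD₁.sub hα hβ hcθ
    exact ⟨hSlin, hSa, hSb, fun x => D₁ x - θ x, E, hTlin, hTa, hTb, hE, haE, hbE,
      TwistedLeibniz.add_sub hl hr hLeib hcent, TwistedLeibniz.sub_add hl hr hLeib hcent⟩
end
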